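/- arXiv:2301.12653 — 12 statements merged into one kernel-verified Lean document; each statement's English description precedes it below -/
import Mathlib

section
/- For every fair division instance with n agents, a finite set M of items, and additive nonnegative valuations, there exists an allocation that is average envy-free up to one item (AEF-1). -/
open Finset

/-- Average value of a bundle: total value divided by cardinality; `0` for the empty bundle. -/
noncomputable def avgVal {G : Type*} (v : G → ℝ) (S : Finset G) : ℝ :=
  (∑ g ∈ S, v g) / (S.card : ℝ)

/-- `A` is an allocation of the item set `M` among `n` agents: the bundles are pairwise
disjoint and their union is `M`. -/
def IsAllocation {G : Type*} [DecidableEq G] (M : Finset G) {n : ℕ}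
    (A : Fin n → Finset G) : Prop :=
  (∀ i j : Fin n, i ≠ j → Disjoint (A i) (A j)) ∧ Finset.univ.biUnion A = M

/-- Average envy-freeness: every agent weakly prefers (on average) their own bundle. -/
def AEF {G : Type*} {n : ℕ} (v : Fin n → G → ℝ) (A : Fin n → Finset G) : Prop :=
  ∀ i h : Fin n, avgVal (v i) (A h) ≤ avgVal (v i) (A i)

/-- Average envy-freeness up to one item. -/
def AEF1 {G : Type*} [DecidableEq G] {n : ℕ} (v : Fin n → G → ℝ)
    (A : Fin n → Finset G) : Prop :=
  ∀ i h : Fin n, (A i ∪ A h).Nonempty →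
    ∃ g ∈ A i ∪ A h, avgVal (v i) ((A h).erase g) ≤ avgVal (v i) ((A i).erase g)

lemma avgVal_nonneg {G : Type*} {v : G → ℝ} (hv : ∀ g, 0 ≤ v g) (S : Finset G) :
    0 ≤ avgVal v S :=
  div_nonneg (Finset.sum_nonneg fun g _ => hv g) (Nat.cast_nonneg _)

lemma avgVal_le_of_forall_le {G : Type*} {v : G → ℝ} {S : Finset G} {c : ℝ}
    (hc : 0 ≤ c) (h : ∀ g ∈ S, v g ≤ c) : avgVal v S ≤ c := by
  rcases S.eq_empty_or_nonempty with rfl | hS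
  · simpa [avgVal] using hc
  · have hcard : (0 : ℝ) < (S.card : ℝ) := by
      exact_mod_cast Finset.card_pos.mpr hS
    rw [avgVal, div_le_iff₀ hcard]
    calc ∑ g ∈ S, v g ≤ ∑ _g ∈ S, c := Finset.sum_le_sum h
      _ = c * S.card := by rw [Finset.sum_const, nsmul_eq_mul, mul_comm]

lemma avgVal_singleton {G : Type*} (v : G → ℝ) (a : G) : avgVal v {a} = v a := by
  simp [avgVal]

/-- Auxiliary construction: there is an allocation where each agent other than `0`
gets at most one item, which they value at least as much as every item of agent `0`'s
bundle; moreover if some such agent gets nothing then agent `0` also gets nothing. -/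
lemma exists_structured {G : Type*} [DecidableEq G] :
    ∀ (n : ℕ) (hn : 0 < n) (M : Finset G) (v : Fin n → G → ℝ),
      ∃ A : Fin n → Finset G, IsAllocation M A ∧
        ∀ i : Fin n, i ≠ ⟨0, hn⟩ →
          (A i = ∅ ∧ A ⟨0, hn⟩ = ∅) ∨
          ∃ a, A i = {a} ∧ ∀ g ∈ A ⟨0, hn⟩, v i g ≤ v i a := by
  intro n
  induction n with
  | zero => intro hn; omega
  | succ k ih =>
    intro hn M v
    rcases Nat.eq_zero_or_pos k with rfl | hk
    · -- one agent: give everything to agent 0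
      refine ⟨fun _ => M, ⟨?_, ?_⟩, ?_⟩
      · intro i j hij
        exact absurd (Fin.ext (by omega : (i : ℕ) = j)) hij
      · ext g; simp
      · intro i hi
        exact absurd (Fin.ext (by omega : (i : ℕ) = 0)) hi
    · rcases M.eq_empty_or_nonempty with rfl | hM
      · refine ⟨fun _ => ∅, ⟨fun _ _ _ => disjoint_empty_left _, by ext g; simp⟩, ?_⟩
        intro i hi; exact Or.inl ⟨rfl, rfl⟩
      · -- last agent takes a favourite item `a` of `M`
        obtain ⟨a, haM, hamax⟩ := M.exists_max_image (v ⟨k, Nat.lt_succ_self k⟩) hM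
        obtain ⟨A', ⟨hdisj, hunion⟩, hprop⟩ :=
          ih hk (M.erase a) (fun t => v t.castSucc)
        set A : Fin (k + 1) → Finset G :=
          fun i => if h : (i : ℕ) < k then A' ⟨i, h⟩ else {a} with hA
        have hsub : ∀ t, A' t ⊆ M.erase a := by
          intro t
          rw [← hunion]
          exact Finset.subset_biUnion_of_mem A' (Finset.mem_univ t)
        have hAzero : A ⟨0, hn⟩ = A' ⟨0, hk⟩ := by simp [hA, hk]
        refine ⟨A, ⟨?_, ?_⟩, ?_⟩
        · -- disjointness
          intro i j hij
          by_cases hi : (i : ℕ) < k <;> by_cases hj : (j : ℕ) < k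
          · simp only [hA, dif_pos hi, dif_pos hj]
            refine hdisj _ _ ?_
            intro hcon
            have h2 := congrArg Fin.val hcon
            exact hij (Fin.ext h2)
          · simp only [hA, dif_pos hi, dif_neg hj]
            rw [Finset.disjoint_singleton_right]
            intro hcon
            exact (M.notMem_erase a) (hsub _ hcon)
          · simp only [hA, dif_neg hi, dif_pos hj]
            rw [Finset.disjoint_singleton_left]
            intro hcon
            exact (M.notMem_erase a) (hsub _ hcon)
          · exact absurd (Fin.ext (by omega : (i : ℕ) = j)) hij
        · -- union
          ext g
          simp only [Finset.mem_biUnion, Finset.mem_univ, true_and]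
          constructor
          · rintro ⟨i, hg⟩
            by_cases hi : (i : ℕ) < k
            · simp only [hA, dif_pos hi] at hg
              exact Finset.mem_of_mem_erase (hsub _ hg)
            · simp only [hA, dif_neg hi, Finset.mem_singleton] at hg
              exact hg ▸ haM
          · intro hg
            by_cases hga : g = a
            · refine ⟨⟨k, Nat.lt_succ_self k⟩, ?_⟩
              simp [hA, hga]
            · have : g ∈ M.erase a := Finset.mem_erase.mpr ⟨hga, hg⟩
              rw [← hunion] at this
              simp only [Finset.mem_biUnion, Finset.mem_univ, true_and] at this
              obtain ⟨t, ht⟩ := this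
              refine ⟨t.castSucc, ?_⟩
              have htk : ((t.castSucc : Fin (k+1)) : ℕ) < k := t.isLt
              simp only [hA, dif_pos htk]
              exact ht
        · -- the structural property
          intro i hi
          by_cases hik : (i : ℕ) < k
          · have hi0 : (⟨(i : ℕ), hik⟩ : Fin k) ≠ ⟨0, hk⟩ := by
              intro hcon
              have h2 := congrArg Fin.val hcon
              exact hi (Fin.ext h2)
            have hAi : A i = A' ⟨(i : ℕ), hik⟩ := by simp [hA, hik]
            have hvi : v i = v (Fin.castSucc ⟨(i : ℕ), hik⟩) :=
              congrArg v (Fin.ext rfl)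
            rcases hprop ⟨(i : ℕ), hik⟩ hi0 with ⟨h1, h2⟩ | ⟨b, hb, hbd⟩
            · exact Or.inl ⟨by rw [hAi, h1], by rw [hAzero, h2]⟩
            · refine Or.inr ⟨b, by rw [hAi, hb], ?_⟩
              intro g hg
              rw [hAzero] at hg
              rw [hvi]
              exact hbd g hg
          · have hAi : A i = {a} := by simp [hA, hik]
            have hik2 : (i : ℕ) = k := by have := i.isLt; omega
            have hieq : i = ⟨k, Nat.lt_succ_self k⟩ := Fin.ext hik2
            refine Or.inr ⟨a, hAi, ?_⟩
            intro g hg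
            rw [hAzero] at hg
            have hgM : g ∈ M := Finset.mem_of_mem_erase (hsub _ hg)
            rw [hieq]
            exact hamax g hgM

/-- For every fair division instance (with at least one agent) an AEF-1 allocation exists. -/
theorem aef1_exists {G : Type*} [DecidableEq G] (M : Finset G) (n : ℕ) (hn : 0 < n)
    (v : Fin n → G → ℝ) (hv : ∀ i g, 0 ≤ v i g) :
    ∃ A : Fin n → Finset G, IsAllocation M A ∧ AEF1 v A := by
  obtain ⟨A, hAlloc, hprop⟩ := exists_structured n hn M v
  refine ⟨A, hAlloc, ?_⟩
  intro i h hne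
  by_cases hih : i = h
  · subst hih
    rw [Finset.union_self] at hne
    obtain ⟨g, hg⟩ := hne
    exact ⟨g, Finset.mem_union_left _ hg, le_refl _⟩
  · by_cases hh0 : h = ⟨0, hn⟩
    · have hi0 : i ≠ ⟨0, hn⟩ := fun hcon => hih (hcon.trans hh0.symm)
      rcases hprop i hi0 with ⟨hie, h0e⟩ | ⟨a, hia, hbd⟩
      · exfalso
        rw [hie, hh0, h0e] at hne
        simp at hne
      · rcases (A h).eq_empty_or_nonempty with hhe | ⟨g, hg⟩
        · refine ⟨a, Finset.mem_union_left _ (hia ▸ Finset.mem_singleton_self a), ?_⟩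
          rw [hhe, hia]
          simp [avgVal]
        · refine ⟨g, Finset.mem_union_right _ hg, ?_⟩
          have hgni : g ∉ A i := fun hcon =>
            (Finset.disjoint_left.mp (hAlloc.1 i h hih) hcon) hg
          rw [Finset.erase_eq_of_notMem hgni, hia, avgVal_singleton]
          refine avgVal_le_of_forall_le (hv i a) ?_
          intro x hx
          exact hbd x (hh0 ▸ Finset.mem_of_mem_erase hx)
    · rcases hprop h hh0 with ⟨hhe2, _⟩ | ⟨a, hha, _⟩
      · rw [hhe2, Finset.union_empty] at hne
        obtain ⟨g, hg⟩ := hne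
        refine ⟨g, Finset.mem_union_left _ hg, ?_⟩
        rw [hhe2]
        simpa [avgVal] using avgVal_nonneg (hv i) ((A i).erase g)
      · refine ⟨a, Finset.mem_union_right _ (hha ▸ Finset.mem_singleton_self a), ?_⟩
        rw [hha]
        simpa [avgVal] using avgVal_nonneg (hv i) ((A i).erase a)
end

section
/- Suppose m > n and the allocation A is obtained by the following greedy picking scheme: there are items g_1, …, g_{n−1} such that for each i ≤ n−1, A_i = {g_i} and v_i(g_i) ≥ v_i(g) for every item g ∈ M \ {g_1, …, g_{i−1}}, and A_n = M \ {g_1, …, g_{n−1}}. Then A is AEF-1. -/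
open Finset

/-- Greedy picking scheme for `m > n`: each of the first `n-1` agents gets their favourite
item among the items not yet picked, and the last agent gets all remaining items.
The resulting allocation is AEF-1. -/
theorem greedy_aef1_of_lt {G : Type*} [DecidableEq G] (M : Finset G) (n : ℕ)
    (hn : 1 ≤ n) (hm : n < M.card)
    (v : Fin n → G → ℝ) (hv : ∀ i g, 0 ≤ v i g)
    (g : ℕ → G)
    (A : Fin n → Finset G) (hA : IsAllocation M A)
    (hfirst : ∀ i : Fin n, (i : ℕ) < n - 1 → A i = {g (i : ℕ)})
    (hgreedy : ∀ i : Fin n, (i : ℕ) < n - 1 →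
      ∀ y ∈ M \ (Finset.range (i : ℕ)).image g, v i y ≤ v i (g (i : ℕ)))
    (hlast : A ⟨n - 1, by omega⟩ = M \ (Finset.range (n - 1)).image g) :
    AEF1 v A := by

  obtain ⟨hdisj, hunion⟩ := hA
  have hAsub : ∀ i, A i ⊆ M := fun i x hx =>
    hunion ▸ mem_biUnion.2 ⟨i, mem_univ _, hx⟩
  have avg_nonneg : ∀ (i : Fin n) (S : Finset G), 0 ≤ avgVal (v i) S := fun i S =>
    div_nonneg (sum_nonneg fun x _ => hv i x) (Nat.cast_nonneg _)
  have avg_le : ∀ (i : Fin n) (S : Finset G) (c : ℝ), 0 ≤ c → (∀ x ∈ S, v i x ≤ c) →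
      avgVal (v i) S ≤ c := by
    intro i S c hc hall
    rcases S.eq_empty_or_nonempty with rfl | hS
    · simpa [avgVal] using hc
    · rw [avgVal, div_le_iff₀ (by exact_mod_cast hS.card_pos)]
      calc ∑ x ∈ S, v i x ≤ S.card • c := Finset.sum_le_card_nsmul _ _ _ hall
        _ = S.card * c := nsmul_eq_mul _ _
        _ = c * S.card := mul_comm _ _
  have hlast' : ∀ i : Fin n, ¬ (i : ℕ) < n - 1 →
      A i = M \ (Finset.range (n - 1)).image g := by
    intro i hi
    have hi' : i = ⟨n - 1, by omega⟩ := Fin.ext (by have := i.isLt; simp; omega)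
    rw [hi', hlast]
  have hlastne : ∀ i : Fin n, ¬ (i : ℕ) < n - 1 → (A i).Nonempty := by
    intro i hi
    rw [hlast' i hi]
    have h1 : ((Finset.range (n - 1)).image g).card ≤ n - 1 :=
      (card_image_le).trans (by simp)
    have h2 := le_card_sdiff ((Finset.range (n - 1)).image g) M
    exact card_pos.1 (by omega)
  intro i h hne
  by_cases hih : i = h
  · subst hih
    obtain ⟨x, hx⟩ : (A i).Nonempty := by simpa using hne
    exact ⟨x, by simp [hx], le_refl _⟩
  · have hd := hdisj i h hih
    rcases Nat.lt_or_ge (h : ℕ) (n - 1) with hh | hh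
    · -- A h = {g h}
      have hAh := hfirst h hh
      have hgh_in : g (h : ℕ) ∈ A h := by simp [hAh]
      have hgh_notin : g (h : ℕ) ∉ A i := fun hmem => disjoint_left.1 hd hmem hgh_in
      refine ⟨g (h : ℕ), by simp [hAh], ?_⟩
      have he : (A h).erase (g (h : ℕ)) = ∅ := by simp [hAh]
      rw [he, erase_eq_of_notMem hgh_notin]
      have h0 : avgVal (v i) (∅ : Finset G) = 0 := by simp [avgVal]
      rw [h0]
      exact avg_nonneg i _
    · -- h is the last agent
      have hAh := hlast' h (by omega)
      have hi : (i : ℕ) < n - 1 := by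
        by_contra hc
        exact hih (Fin.ext (by rw [(Fin.ext_iff).1 (Fin.ext (rfl : ((i : ℕ)) = i))]; have := i.isLt; have := h.isLt; omega))
      have hAi := hfirst i hi
      obtain ⟨x, hx⟩ := hlastne h (by omega)
      have hx_notin : x ∉ A i := fun hmem => disjoint_left.1 hd hmem hx
      refine ⟨x, by simp [hx], ?_⟩
      rw [erase_eq_of_notMem hx_notin, hAi]
      have hsingle : avgVal (v i) {g (i : ℕ)} = v i (g (i : ℕ)) := by simp [avgVal]
      rw [hsingle]
      apply avg_le i _ _ (hv i _)
      intro y hy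
      have hy' : y ∈ A h := mem_of_mem_erase hy
      rw [hAh] at hy'
      obtain ⟨hyM, hynot⟩ := mem_sdiff.1 hy'
      apply hgreedy i hi
      refine mem_sdiff.2 ⟨hyM, fun hmem => hynot ?_⟩
      exact image_subset_image (range_subset_range.2 (by omega)) hmem
end

section
/- Suppose v_i(g) ≤ 1 for every agent i and every item g, and let 0 < α ≤ 1. If an allocation A is α-AEF-1, then A is (1−α)-error AEF-1. -/
open Finset

/-- `α`-AEF-1: for every pair of agents there is an item whose removal leaves agent `i`
with at least an `α` fraction of the other bundle's average value. -/
def AEF1Mul {G : Type*} [DecidableEq G] {n : ℕ} (α : ℝ) (v : Fin n → G → ℝ)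
    (A : Fin n → Finset G) : Prop :=
  ∀ i h : Fin n, (A i ∪ A h).Nonempty →
    ∃ g ∈ A i ∪ A h, α * avgVal (v i) ((A h).erase g) ≤ avgVal (v i) ((A i).erase g)

/-- `ε`-error AEF-1: envy after removing one item is at most `ε`. -/
def AEF1Err {G : Type*} [DecidableEq G] {n : ℕ} (ε : ℝ) (v : Fin n → G → ℝ)
    (A : Fin n → Finset G) : Prop :=
  ∀ i h : Fin n, (A i ∪ A h).Nonempty →
    ∃ g ∈ A i ∪ A h, avgVal (v i) ((A h).erase g) - ε ≤ avgVal (v i) ((A i).erase g)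


lemma avgVal_le_one {G : Type*} (v : G → ℝ) (S : Finset G) (h1 : ∀ g, v g ≤ 1) :
    avgVal v S ≤ 1 := by
  unfold avgVal
  rcases S.eq_empty_or_nonempty with rfl | hS
  · simp
  · rw [div_le_one (by exact_mod_cast hS.card_pos)]
    calc ∑ g ∈ S, v g ≤ ∑ g ∈ S, (1:ℝ) := Finset.sum_le_sum (fun g _ => h1 g)
      _ = S.card := by simp

/-- If all item values are at most `1`, then an `α`-AEF-1 allocation is `(1-α)`-error AEF-1. -/
theorem aef1mul_implies_aef1err {G : Type*} [DecidableEq G] (M : Finset G) (n : ℕ)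
    (v : Fin n → G → ℝ) (hv : ∀ i g, 0 ≤ v i g) (hv1 : ∀ i g, v i g ≤ 1)
    (α : ℝ) (hα : 0 < α) (hα1 : α ≤ 1)
    (A : Fin n → Finset G) (hA : IsAllocation M A)
    (h : AEF1Mul α v A) : AEF1Err (1 - α) v A := by
  intro i j hne
  obtain ⟨g, hg, hle⟩ := h i j hne
  refine ⟨g, hg, ?_⟩
  have h1 : avgVal (v i) ((A j).erase g) ≤ 1 := avgVal_le_one _ _ (hv1 i)
  nlinarith
end

section
/- In the Partition-reduction instance, suppose Y ⊆ {1, …, k} satisfies Σ_{j∈Y} x_j = T. Then the allocation A with A_1 = {g^l_j : j ∈ Y} ∪ {g^s_j : j ∉ Y} and A_2 the remaining items satisfies |A_1| = |A_2| = k and u(A_1) = u(A_2) = (T + Σ_{j=1}^k (T²k²)^j)/k; in particular A is AEF. -/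
open Finset

/-- The identical valuation of the Partition-reduction instance over the `2k` items,
encoded as pairs `(j, b) : Fin k × Bool`: the item `gˢ_{j+1}` is `(j, false)` with value
`(T²k²)^(j+1)`, and the item `gˡ_{j+1}` is `(j, true)` with value `(T²k²)^(j+1) + x_{j+1}`. -/
noncomputable def pv (k T : ℕ) (x : Fin k → ℕ) (p : Fin k × Bool) : ℝ :=
  ((T ^ 2 * k ^ 2 : ℕ) : ℝ) ^ ((p.1 : ℕ) + 1) + (if p.2 then (x p.1 : ℝ) else 0)

lemma pr_aux (k T : ℕ) (x : Fin k → ℕ) (Z W : Finset (Fin k)) (hZW : Zᶜ = W)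
    (B : Finset (Fin k × Bool))
    (hB : B = Z.image (fun j => (j, true)) ∪ W.image (fun j => (j, false))) :
    B.card = k ∧
    ∑ p ∈ B, pv k T x p =
      (∑ j ∈ Z, (x j : ℝ)) + ∑ j ∈ Finset.range k, ((T ^ 2 * k ^ 2 : ℕ) : ℝ) ^ (j + 1) := by
  subst hZW
  have hinj1 : Set.InjOn (fun j : Fin k => (j, true)) Z := fun a _ b _ h => by
    simpa using h
  have hinj2 : Set.InjOn (fun j : Fin k => (j, false)) ((Zᶜ : Finset (Fin k)) : Set (Fin k)) := fun a _ b _ h => by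
    simpa using h
  have hdisj : Disjoint (Z.image (fun j => (j, true)))
      (Zᶜ.image (fun j : Fin k => (j, false))) := by
    simp [Finset.disjoint_left]
  constructor
  · rw [hB, Finset.card_union_of_disjoint hdisj,
      Finset.card_image_of_injOn hinj1, Finset.card_image_of_injOn hinj2]
    have := Finset.card_add_card_compl Z
    simp only [Fintype.card_fin] at this
    omega
  · rw [hB, Finset.sum_union hdisj, Finset.sum_image (fun a ha b hb => hinj1 ha hb),
      Finset.sum_image (fun a ha b hb => hinj2 ha hb)]
    simp only [pv, if_true, Bool.false_eq_true, if_false, Finset.sum_add_distrib,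
      Finset.sum_const_zero, add_zero]
    have hsplit : (∑ j ∈ Z, ((T ^ 2 * k ^ 2 : ℕ) : ℝ) ^ ((j : ℕ) + 1))
        + ∑ j ∈ Zᶜ, ((T ^ 2 * k ^ 2 : ℕ) : ℝ) ^ ((j : ℕ) + 1)
        = ∑ j ∈ Finset.range k, ((T ^ 2 * k ^ 2 : ℕ) : ℝ) ^ (j + 1) := by
      rw [Finset.sum_add_sum_compl, ← Fin.sum_univ_eq_sum_range]
    ring_nf
    ring_nf at hsplit
    linarith

/-- Given an equal-sum subset `Y`, the allocation giving agent 1 the items `gˡ_j` for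
`j ∈ Y` and `gˢ_j` for `j ∉ Y` (and agent 2 the rest) has bundles of size `k`, both of
average value `(T + Σ_{j=1}^k (T²k²)^j)/k`; in particular it is AEF. -/
theorem partition_reduction_forward (k T : ℕ) (hk : 4 ≤ k) (hT : 4 ≤ T)
    (x : Fin k → ℕ) (hsum : ∑ j, x j = 2 * T)
    (Y : Finset (Fin k)) (hY : ∑ j ∈ Y, x j = T)
    (A1 A2 : Finset (Fin k × Bool))
    (hA1 : A1 = Y.image (fun j => (j, true)) ∪ Yᶜ.image (fun j => (j, false)))
    (hA2 : A2 = A1ᶜ) :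
    A1.card = k ∧ A2.card = k ∧
    avgVal (pv k T x) A1
      = ((T : ℝ) + ∑ j ∈ Finset.range k, ((T ^ 2 * k ^ 2 : ℕ) : ℝ) ^ (j + 1)) / (k : ℝ) ∧
    avgVal (pv k T x) A2
      = ((T : ℝ) + ∑ j ∈ Finset.range k, ((T ^ 2 * k ^ 2 : ℕ) : ℝ) ^ (j + 1)) / (k : ℝ) ∧
    avgVal (pv k T x) A1 = avgVal (pv k T x) A2 := by
  have h1 := pr_aux k T x Y Yᶜ rfl A1 hA1
  have hA2' : A2 = Yᶜ.image (fun j => (j, true)) ∪ Y.image (fun j => (j, false)) := by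
    rw [hA2, hA1]
    ext ⟨j, b⟩
    by_cases hj : j ∈ Y <;> cases b <;> simp [hj]
  have h2 := pr_aux k T x Yᶜ Y (compl_compl Y) A2 hA2'
  have hYc : ∑ j ∈ Yᶜ, x j = T := by
    have := Finset.sum_add_sum_compl Y x
    omega
  have hYr : (∑ j ∈ Y, (x j : ℝ)) = (T : ℝ) := by
    rw [← Nat.cast_sum, hY]
  have hYcr : (∑ j ∈ Yᶜ, (x j : ℝ)) = (T : ℝ) := by
    rw [← Nat.cast_sum, hYc]
  obtain ⟨hc1, hs1⟩ := h1
  obtain ⟨hc2, hs2⟩ := h2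
  have e1 : avgVal (pv k T x) A1
      = ((T : ℝ) + ∑ j ∈ Finset.range k, ((T ^ 2 * k ^ 2 : ℕ) : ℝ) ^ (j + 1)) / (k : ℝ) := by
    rw [avgVal, hs1, hYr, hc1]
  have e2 : avgVal (pv k T x) A2
      = ((T : ℝ) + ∑ j ∈ Finset.range k, ((T ^ 2 * k ^ 2 : ℕ) : ℝ) ^ (j + 1)) / (k : ℝ) := by
    rw [avgVal, hs2, hYcr, hc2]
  exact ⟨hc1, hc2, e1, e2, e1.trans e2.symm⟩
end

section
/- In the Partition-reduction instance, every AEF allocation (A_1, A_2) satisfies |A_1| = |A_2| = k, and consequently v(A_1) = v(A_2). -/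
open Finset

/-!
An AEF partition gives each bundle the overall average value, so `2k · v(A₁) = |A₁| · v(all)`,
and both bundles are nonempty since all values are positive. Modulo `M²`, `M = T²k²`, an item of
level `j ≥ 2` contributes only its `x`-part, so both sides of that identity become two-digit
numbers in base `M` (the bounds `k ≥ 4`, `T ≥ 4` keep every digit below `M`). Comparing the
`M`-digits gives `k · c = |A₁|`, where `c` is the number of level-one items in `A₁`; as
`0 < |A₁| < 2k`, this forces `c = 1` and `|A₁| = k`.
-/

section AverageEnvyFree

variable {G : Type*} {v : G → ℝ} {S A1 A2 : Finset G}

theorem avgVal_pos (hv : ∀ g ∈ S, 0 < v g) (hS : S.Nonempty) : 0 < avgVal v S :=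
  div_pos (sum_pos hv hS) (by exact_mod_cast hS.card_pos)

variable [Fintype G] [DecidableEq G]

theorem nonempty_of_avgVal_eq [Nonempty G] (hv : ∀ g, 0 < v g) (hcover : A1 ∪ A2 = univ)
    (h : avgVal v A1 = avgVal v A2) : A1.Nonempty := by
  rw [nonempty_iff_ne_empty]
  rintro rfl
  rw [empty_union] at hcover
  have hpos := avgVal_pos (fun g _ => hv g) (hcover ▸ univ_nonempty : A2.Nonempty)
  rw [← h] at hpos
  simp [avgVal] at hpos

theorem card_mul_sum_eq_of_avgVal_eq (hdisj : Disjoint A1 A2) (hcover : A1 ∪ A2 = univ)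
    (h : avgVal v A1 = avgVal v A2) :
    (Fintype.card G : ℝ) * ∑ g ∈ A1, v g = #A1 * ∑ g, v g := by
  have hcross : (∑ g ∈ A1, v g) * #A2 = (∑ g ∈ A2, v g) * #A1 := by
    rcases A1.eq_empty_or_nonempty with rfl | h1
    · simp
    rcases A2.eq_empty_or_nonempty with rfl | h2
    · simp_all [avgVal]
    rwa [avgVal, avgVal, div_eq_div_iff (by exact_mod_cast h1.card_pos.ne')
      (by exact_mod_cast h2.card_pos.ne')] at h
  rw [← card_univ, ← hcover, card_union_of_disjoint hdisj, sum_union hdisj]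
  push_cast
  linarith

end AverageEnvyFree

theorem Nat.eq_and_eq_of_mul_add_modEq_sq {M u₁ u₂ v₁ v₂ : ℕ} (hu₁ : u₁ < M) (hu₂ : u₂ < M)
    (hv₁ : v₁ < M) (hv₂ : v₂ < M) (h : u₁ * M + v₁ ≡ u₂ * M + v₂ [MOD M ^ 2]) :
    u₁ = u₂ ∧ v₁ = v₂ := by
  have hlt : ∀ {u v}, u < M → v < M → u * M + v < M ^ 2 := fun hu hv => by nlinarith
  have heq := h.eq_of_lt_of_lt (hlt hu₁ hv₁) (hlt hu₂ hv₂)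
  have hM : 0 < M := hu₁.pos
  have hu : u₁ = u₂ := by
    simpa [add_comm, Nat.add_mul_div_right _ _ hM, Nat.div_eq_of_lt hv₁, Nat.div_eq_of_lt hv₂]
      using congrArg (· / M) heq
  subst hu
  exact ⟨rfl, by omega⟩

theorem sum_pow_succ_add_modEq {ι : Type*} (M : ℕ) (f y : ι → ℕ) (A : Finset ι) :
    ∑ i ∈ A, (M ^ (f i + 1) + y i) ≡ #{i ∈ A | f i = 0} * M + ∑ i ∈ A, y i [MOD M ^ 2] := by
  have hterm : ∀ i, M ^ (f i + 1) ≡ if f i = 0 then M else 0 [MOD M ^ 2] := fun i => by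
    split_ifs with hi
    · simp [hi, Nat.ModEq.refl]
    · exact Nat.modEq_zero_iff_dvd.2 (pow_dvd_pow M (by omega))
  calc ∑ i ∈ A, (M ^ (f i + 1) + y i)
      ≡ ∑ i ∈ A, ((if f i = 0 then M else 0) + y i) [MOD M ^ 2] :=
        Nat.ModEq.sum fun i _ => (hterm i).add_right _
    _ = #{i ∈ A | f i = 0} * M + ∑ i ∈ A, y i := by
        rw [sum_add_distrib, sum_ite, sum_const_zero, sum_const, smul_eq_mul, add_zero]

def itemWeight (k T : ℕ) (x : Fin k → ℕ) (p : Fin k × Bool) : ℕ :=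
  (T ^ 2 * k ^ 2) ^ ((p.1 : ℕ) + 1) + if p.2 then x p.1 else 0

section PartitionInstance

variable {k T : ℕ} {x : Fin k → ℕ}

theorem pv_eq_itemWeight (p : Fin k × Bool) : pv k T x p = itemWeight k T x p := by
  unfold pv itemWeight
  split_ifs <;> push_cast <;> ring

theorem card_filter_fst_val_eq_zero (hk : 0 < k) : #{p : Fin k × Bool | (p.1 : ℕ) = 0} = 2 := by
  have : ({p : Fin k × Bool | (p.1 : ℕ) = 0} : Finset _) = {⟨0, hk⟩} ×ˢ univ := by
    ext ⟨j, b⟩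
    cases b <;> simp [Fin.ext_iff]
  simp [this]

theorem sum_ite_snd_univ :
    ∑ p : Fin k × Bool, (if p.2 then x p.1 else 0) = ∑ j, x j := by
  simp [Fintype.sum_prod_type]

theorem sum_itemWeight_univ_modEq (hk : 0 < k) (hsum : ∑ j, x j = 2 * T) :
    ∑ p, itemWeight k T x p ≡ 2 * (T ^ 2 * k ^ 2) + 2 * T [MOD (T ^ 2 * k ^ 2) ^ 2] := by
  have := sum_pow_succ_add_modEq (T ^ 2 * k ^ 2) (fun p : Fin k × Bool => (p.1 : ℕ))
    (fun p => if p.2 then x p.1 else 0) univ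
  rwa [card_filter_fst_val_eq_zero hk, sum_ite_snd_univ, hsum] at this

theorem card_eq_of_two_mul_sum_itemWeight_eq (hk : 4 ≤ k) (hT : 4 ≤ T)
    (hsum : ∑ j, x j = 2 * T) {A : Finset (Fin k × Bool)} (hA : 0 < #A) (hA' : #A < 2 * k)
    (h : 2 * k * ∑ p ∈ A, itemWeight k T x p = #A * ∑ p, itemWeight k T x p) : #A = k := by
  set M := T ^ 2 * k ^ 2 with hM
  set c := #{p ∈ A | (p.1 : ℕ) = 0}
  set X := ∑ p ∈ A, if p.2 then x p.1 else 0
  have hc : c ≤ #A := card_filter_le _ _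
  have hX : X ≤ 2 * T := hsum ▸ sum_ite_snd_univ ▸ sum_le_sum_of_subset (subset_univ A)
  have hMk : 4 * k * k < M := by
    have : 16 ≤ T ^ 2 := by nlinarith
    nlinarith [Nat.mul_le_mul_right (k ^ 2) this]
  have hMT : 4 * k * T < M := by
    have : 16 ≤ T * k := by nlinarith
    nlinarith [Nat.mul_le_mul_right (T * k) this]
  have hmod : (2 * k * c) * M + 2 * k * X ≡ (2 * #A) * M + 2 * #A * T [MOD M ^ 2] :=
    calc (2 * k * c) * M + 2 * k * X = 2 * k * (c * M + X) := by ring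
      _ ≡ 2 * k * ∑ p ∈ A, itemWeight k T x p [MOD M ^ 2] :=
        ((sum_pow_succ_add_modEq M (fun p : Fin k × Bool => (p.1 : ℕ)) _ A).symm.mul_left _)
      _ = #A * ∑ p, itemWeight k T x p := h
      _ ≡ #A * (2 * M + 2 * T) [MOD M ^ 2] :=
        (sum_itemWeight_univ_modEq (by omega) hsum).mul_left _
      _ = (2 * #A) * M + 2 * #A * T := by ring
  obtain ⟨hdigit, -⟩ := Nat.eq_and_eq_of_mul_add_modEq_sq (by nlinarith) (by nlinarith)
    (by nlinarith) (by nlinarith) hmod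
  obtain hc0 | hc1 | hc2 : c = 0 ∨ c = 1 ∨ 2 ≤ c := by omega
  · rw [hc0] at hdigit; omega
  · rw [hc1] at hdigit; omega
  · nlinarith

end PartitionInstance

/-- In the Partition-reduction instance, every AEF allocation gives each agent exactly
`k` items, and hence the two bundles have equal total value. -/
theorem partition_reduction_equal_cards (k T : ℕ) (hk : 4 ≤ k) (hT : 4 ≤ T)
    (x : Fin k → ℕ) (hsum : ∑ j, x j = 2 * T)
    (A1 A2 : Finset (Fin k × Bool))
    (hdisj : Disjoint A1 A2) (hcover : A1 ∪ A2 = Finset.univ)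
    (hAEF : avgVal (pv k T x) A1 = avgVal (pv k T x) A2) :
    A1.card = k ∧ A2.card = k ∧ ∑ g ∈ A1, pv k T x g = ∑ g ∈ A2, pv k T x g := by
  have : NeZero k := ⟨by omega⟩
  have hpos : ∀ p, 0 < pv k T x p := fun p => by unfold pv; positivity
  have hne1 := nonempty_of_avgVal_eq hpos hcover hAEF
  have hne2 := nonempty_of_avgVal_eq hpos (union_comm A2 A1 ▸ hcover) hAEF.symm
  have hcard : #A1 + #A2 = 2 * k := by
    rw [← card_union_of_disjoint hdisj, hcover, card_univ]
    simp [mul_comm]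
  have hbal : 2 * k * ∑ p ∈ A1, itemWeight k T x p = #A1 * ∑ p, itemWeight k T x p := by
    have := card_mul_sum_eq_of_avgVal_eq hdisj hcover hAEF
    simp only [pv_eq_itemWeight, Fintype.card_prod, Fintype.card_fin, Fintype.card_bool] at this
    rw [mul_comm k 2] at this
    exact_mod_cast this
  have h1 : #A1 = k := card_eq_of_two_mul_sum_itemWeight_eq hk hT hsum hne1.card_pos
    (by have := hne2.card_pos; omega) hbal
  have h2 : #A2 = k := by omega
  refine ⟨h1, h2, ?_⟩
  rw [avgVal, avgVal, h1, h2] at hAEF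
  exact (div_left_inj' (by exact_mod_cast NeZero.ne k)).1 hAEF
end

section
/- In the Partition-reduction instance, every AEF allocation (A_1, A_2) satisfies: for every j ∈ {1, …, k}, exactly one of g^s_j, g^l_j lies in A_1 and the other lies in A_2. -/
open Finset

/-- Uniqueness of small base-`M` digits: if signed digits of absolute value `< M` sum to `0`,
then all digits are `0`. -/
lemma digits_all_zero (M : ℤ) (hM : 0 < M) :
    ∀ n (e : ℕ → ℤ), (∀ j, j < n → |e j| < M) →
      (∑ j ∈ Finset.range n, e j * M ^ j) = 0 → ∀ j, j < n → e j = 0 := by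
  intro n
  induction n with
  | zero => intro e _ _ j hj; omega
  | succ n ih =>
    intro e hb hs j hj
    rw [Finset.sum_range_succ'] at hs
    have hfac : ∑ i ∈ Finset.range n, e (i + 1) * M ^ (i + 1)
        = M * ∑ i ∈ Finset.range n, e (i + 1) * M ^ i := by
      rw [Finset.mul_sum]; exact Finset.sum_congr rfl fun i _ => by ring
    rw [hfac, pow_zero, mul_one] at hs
    have hdvd : M ∣ e 0 := ⟨-(∑ i ∈ Finset.range n, e (i + 1) * M ^ i), by linarith⟩
    have he0 : e 0 = 0 := Int.eq_zero_of_abs_lt_dvd hdvd (hb 0 (Nat.succ_pos n))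
    have hs' : ∑ i ∈ Finset.range n, e (i + 1) * M ^ i = 0 := by
      rw [he0, add_zero] at hs
      exact (mul_eq_zero.mp hs).resolve_left (ne_of_gt hM)
    rcases Nat.eq_zero_or_pos j with rfl | hjpos
    · exact he0
    · obtain ⟨j', rfl⟩ := Nat.exists_eq_succ_of_ne_zero (Nat.pos_iff_ne_zero.mp hjpos)
      exact ih (fun i => e (i + 1)) (fun i hi => hb (i + 1) (by omega)) hs' j' (by omega)

set_option maxHeartbeats 1000000 in
/-- In the Partition-reduction instance, every AEF allocation gives, for each
`j ∈ {1,…,k}`, exactly one of `gˢ_j, gˡ_j` to agent 1 and the other to agent 2. -/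
theorem partition_reduction_pair_split (k T : ℕ) (hk : 4 ≤ k) (hT : 4 ≤ T)
    (x : Fin k → ℕ) (hsum : ∑ j, x j = 2 * T)
    (A1 A2 : Finset (Fin k × Bool))
    (hdisj : Disjoint A1 A2) (hcover : A1 ∪ A2 = Finset.univ)
    (hAEF : avgVal (pv k T x) A1 = avgVal (pv k T x) A2) :
    ∀ j : Fin k,
      ((j, false) ∈ A1 ∧ (j, true) ∈ A2) ∨ ((j, false) ∈ A2 ∧ (j, true) ∈ A1) := by
  classical
  have hk0 : 0 < k := by omega
  set M : ℕ := T ^ 2 * k ^ 2 with hMdef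
  have hMpos : 0 < M := by positivity
  have hMZ : (0 : ℤ) < (M : ℤ) := by exact_mod_cast hMpos
  -- integer version of the valuation
  set w : Fin k × Bool → ℤ :=
    fun p => (M : ℤ) ^ ((p.1 : ℕ) + 1) + (if p.2 then (x p.1 : ℤ) else 0) with hwdef
  have hpw : ∀ p, pv k T x p = ((w p : ℤ) : ℝ) := by
    intro p
    simp only [pv, hwdef, hMdef]
    split_ifs <;> push_cast <;> ring
  have hwpos : ∀ p, 0 < w p := by
    intro p
    have h1 : (0 : ℤ) < (M : ℤ) ^ ((p.1 : ℕ) + 1) := pow_pos hMZ _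
    have h2 : (0 : ℤ) ≤ (if p.2 then (x p.1 : ℤ) else 0) := by positivity
    simp only [hwdef]; linarith
  have hmem : ∀ p : Fin k × Bool, (p ∈ A1 ∧ p ∉ A2) ∨ (p ∉ A1 ∧ p ∈ A2) := by
    intro p
    have hp : p ∈ A1 ∪ A2 := by rw [hcover]; exact mem_univ p
    rw [Finset.mem_union] at hp
    have hd := Finset.disjoint_left.mp hdisj
    tauto
  -- average value positive on nonempty sets
  have avg_pos : ∀ S : Finset (Fin k × Bool), S.Nonempty → 0 < avgVal (pv k T x) S := by
    intro S hS
    have hpos : 0 < ∑ p ∈ S, pv k T x p := by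
      apply Finset.sum_pos _ hS
      intro p _
      rw [hpw p]
      exact_mod_cast hwpos p
    have hcpos : (0 : ℝ) < (S.card : ℝ) := by exact_mod_cast Finset.card_pos.mpr hS
    exact div_pos hpos hcpos
  have huniv : (Finset.univ : Finset (Fin k × Bool)).Nonempty := ⟨(⟨0, hk0⟩, false), mem_univ _⟩
  have hne1 : A1.Nonempty := by
    by_contra h
    rw [Finset.not_nonempty_iff_eq_empty] at h
    have hA2 : A2 = Finset.univ := by rw [← hcover, h, Finset.empty_union]
    have : avgVal (pv k T x) A1 = 0 := by simp [avgVal, h]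
    rw [this] at hAEF
    have := avg_pos A2 (hA2 ▸ huniv)
    linarith
  have hne2 : A2.Nonempty := by
    by_contra h
    rw [Finset.not_nonempty_iff_eq_empty] at h
    have hA1 : A1 = Finset.univ := by rw [← hcover, h, Finset.union_empty]
    have : avgVal (pv k T x) A2 = 0 := by simp [avgVal, h]
    rw [this] at hAEF
    have := avg_pos A1 (hA1 ▸ huniv)
    linarith
  -- integer sums
  set S1 : ℤ := ∑ p ∈ A1, w p with hS1def
  set S2 : ℤ := ∑ p ∈ A2, w p with hS2def
  set n1 : ℤ := (A1.card : ℤ) with hn1def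
  set n2 : ℤ := (A2.card : ℤ) with hn2def
  have hsum1 : ∑ p ∈ A1, pv k T x p = ((S1 : ℤ) : ℝ) := by
    rw [hS1def]; push_cast
    exact Finset.sum_congr rfl fun p _ => hpw p
  have hsum2 : ∑ p ∈ A2, pv k T x p = ((S2 : ℤ) : ℝ) := by
    rw [hS2def]; push_cast
    exact Finset.sum_congr rfl fun p _ => hpw p
  have hc1pos : (0 : ℝ) < (A1.card : ℝ) := by exact_mod_cast Finset.card_pos.mpr hne1
  have hc2pos : (0 : ℝ) < (A2.card : ℝ) := by exact_mod_cast Finset.card_pos.mpr hne2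
  have key : n2 * S1 = n1 * S2 := by
    have h := hAEF
    rw [avgVal, avgVal, div_eq_div_iff (ne_of_gt hc1pos) (ne_of_gt hc2pos), hsum1, hsum2] at h
    have h' : ((n2 * S1 : ℤ) : ℝ) = ((n1 * S2 : ℤ) : ℝ) := by
      rw [hn1def, hn2def]; push_cast; linarith
    exact_mod_cast h'
  -- counts per level and x-contributions
  set c : Fin k → ℤ :=
    fun j => (if (j, false) ∈ A1 then 1 else 0) + (if (j, true) ∈ A1 then 1 else 0) with hcdef
  set y1 : ℤ := ∑ j : Fin k, (if (j, true) ∈ A1 then (x j : ℤ) else 0) with hy1def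
  set y2 : ℤ := ∑ j : Fin k, (if (j, true) ∈ A2 then (x j : ℤ) else 0) with hy2def
  -- decomposition of sums over any bundle
  have decomp : ∀ A : Finset (Fin k × Bool),
      ∑ p ∈ A, w p = ∑ j : Fin k,
        (((if (j, false) ∈ A then 1 else 0) + (if (j, true) ∈ A then (1 : ℤ) else 0))
            * (M : ℤ) ^ ((j : ℕ) + 1) + (if (j, true) ∈ A then (x j : ℤ) else 0)) := by
    intro A
    have h0 : ∑ p ∈ A, w p = ∑ p : Fin k × Bool, (if p ∈ A then w p else 0) := by
      rw [Finset.sum_ite_mem, Finset.univ_inter]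
    rw [h0, Fintype.sum_prod_type]
    refine Finset.sum_congr rfl fun j _ => ?_
    rw [Fintype.sum_bool]
    split_ifs <;> simp [hwdef] <;> ring
  have cardeq : ∀ A : Finset (Fin k × Bool),
      (A.card : ℤ) = ∑ j : Fin k,
        ((if (j, false) ∈ A then 1 else 0) + (if (j, true) ∈ A then (1 : ℤ) else 0)) := by
    intro A
    have h0 : (A.card : ℤ) = ∑ p : Fin k × Bool, (if p ∈ A then (1 : ℤ) else 0) := by
      rw [Finset.sum_ite_mem, Finset.univ_inter, Finset.sum_const, nsmul_eq_mul, mul_one]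
    rw [h0, Fintype.sum_prod_type]
    exact Finset.sum_congr rfl fun j _ => by rw [Fintype.sum_bool]; ring
  -- complementary counts
  have hc2 : ∀ j : Fin k,
      ((if (j, false) ∈ A2 then 1 else 0) + (if (j, true) ∈ A2 then (1 : ℤ) else 0)) = 2 - c j := by
    intro j
    rcases hmem (j, false) with ⟨hf1, hf2⟩ | ⟨hf1, hf2⟩ <;>
      rcases hmem (j, true) with ⟨ht1, ht2⟩ | ⟨ht1, ht2⟩ <;>
      simp [hcdef, hf1, hf2, ht1, ht2]
  have hyy : y1 + y2 = 2 * (T : ℤ) := by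
    rw [hy1def, hy2def, ← Finset.sum_add_distrib]
    have : ∀ j : Fin k,
        (if (j, true) ∈ A1 then (x j : ℤ) else 0) + (if (j, true) ∈ A2 then (x j : ℤ) else 0)
          = (x j : ℤ) := by
      intro j
      rcases hmem (j, true) with ⟨ht1, ht2⟩ | ⟨ht1, ht2⟩ <;> simp [ht1, ht2]
    rw [Finset.sum_congr rfl fun j _ => this j]
    exact_mod_cast hsum
  have hy1nn : 0 ≤ y1 := Finset.sum_nonneg fun j _ => by positivity
  have hy2nn : 0 ≤ y2 := Finset.sum_nonneg fun j _ => by positivity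
  have hnn : n1 + n2 = 2 * (k : ℤ) := by
    have h0 := Finset.card_union_of_disjoint hdisj
    rw [hcover, Finset.card_univ] at h0
    have h1 : A1.card + A2.card = 2 * k := by
      simp [Fintype.card_prod, Fintype.card_bool, Fintype.card_fin] at h0
      omega
    rw [hn1def, hn2def]
    exact_mod_cast h1
  have hn1pos : 1 ≤ n1 := by rw [hn1def]; exact_mod_cast Finset.card_pos.mpr hne1
  have hn2pos : 1 ≤ n2 := by rw [hn2def]; exact_mod_cast Finset.card_pos.mpr hne2
  -- decompose S1, S2
  have hS1 : S1 = ∑ j : Fin k,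
      (c j * (M : ℤ) ^ ((j : ℕ) + 1) + (if (j, true) ∈ A1 then (x j : ℤ) else 0)) := decomp A1
  have hS2 : S2 = ∑ j : Fin k,
      ((2 - c j) * (M : ℤ) ^ ((j : ℕ) + 1) + (if (j, true) ∈ A2 then (x j : ℤ) else 0)) := by
    rw [hS2def, decomp A2]
    exact Finset.sum_congr rfl fun j _ => by rw [hc2 j]
  have hcard1 : n1 = ∑ j : Fin k, c j := cardeq A1
  -- the key balance equation
  have heq : ∑ j : Fin k, (2 * (k : ℤ) * c j - 2 * n1) * (M : ℤ) ^ ((j : ℕ) + 1)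
      = n1 * y2 - n2 * y1 := by
    have hn2e : n2 = 2 * (k : ℤ) - n1 := by linarith
    have expand : n2 * S1 - n1 * S2
        = ∑ j : Fin k, (2 * (k : ℤ) * c j - 2 * n1) * (M : ℤ) ^ ((j : ℕ) + 1)
          + (n2 * y1 - n1 * y2) := by
      rw [hS1, hS2, Finset.mul_sum, Finset.mul_sum, hy1def, hy2def, Finset.mul_sum,
        Finset.mul_sum, ← Finset.sum_sub_distrib, ← Finset.sum_sub_distrib,
        ← Finset.sum_add_distrib]
      refine Finset.sum_congr rfl fun j _ => ?_
      rw [hn2e]; ring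
    rw [key] at expand
    linarith [expand]
  -- bound the right-hand side
  have hn1ub : n1 ≤ 2 * (k : ℤ) := by linarith
  have hkZ : (4 : ℤ) ≤ (k : ℤ) := by exact_mod_cast hk
  have hTZ : (4 : ℤ) ≤ (T : ℤ) := by exact_mod_cast hT
  have hMbig : 4 * (k : ℤ) * (T : ℤ) < (M : ℤ) := by
    have hMe : (M : ℤ) = ((k : ℤ) * (T : ℤ)) ^ 2 := by rw [hMdef]; push_cast; ring
    have hP : (16 : ℤ) ≤ (k : ℤ) * (T : ℤ) := by nlinarith
    nlinarith [sq_nonneg ((k : ℤ) * (T : ℤ) - 4)]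
  have hrhs : |n1 * y2 - n2 * y1| < (M : ℤ) := by
    have hy2ub : y2 ≤ 2 * (T : ℤ) := by linarith
    have hy1ub : y1 ≤ 2 * (T : ℤ) := by linarith
    have hn2ub : n2 ≤ 2 * (k : ℤ) := by linarith
    have hn1nn : (0 : ℤ) ≤ n1 := by linarith
    have hn2nn : (0 : ℤ) ≤ n2 := by linarith
    have h1 : n1 * y2 ≤ 2 * (k : ℤ) * (2 * (T : ℤ)) := mul_le_mul hn1ub hy2ub hy2nn (by linarith)
    have h2 : n2 * y1 ≤ 2 * (k : ℤ) * (2 * (T : ℤ)) := mul_le_mul hn2ub hy1ub hy1nn (by linarith)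
    have h3 : 0 ≤ n1 * y2 := mul_nonneg hn1nn hy2nn
    have h4 : 0 ≤ n2 * y1 := mul_nonneg hn2nn hy1nn
    rw [abs_lt]
    constructor <;> linarith
  -- factor out M and kill the remainder
  have hfac : ∑ j : Fin k, (2 * (k : ℤ) * c j - 2 * n1) * (M : ℤ) ^ ((j : ℕ) + 1)
      = (∑ j : Fin k, (2 * (k : ℤ) * c j - 2 * n1) * (M : ℤ) ^ (j : ℕ)) * (M : ℤ) := by
    rw [Finset.sum_mul]
    exact Finset.sum_congr rfl fun j _ => by ring
  have hdvd : (M : ℤ) ∣ n1 * y2 - n2 * y1 :=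
    ⟨∑ j : Fin k, (2 * (k : ℤ) * c j - 2 * n1) * (M : ℤ) ^ (j : ℕ), by rw [← heq, hfac]; ring⟩
  have hrz : n1 * y2 - n2 * y1 = 0 := Int.eq_zero_of_abs_lt_dvd hdvd hrhs
  have hQ : (∑ j : Fin k, (2 * (k : ℤ) * c j - 2 * n1) * (M : ℤ) ^ (j : ℕ)) = 0 := by
    have h0 : (∑ j : Fin k, (2 * (k : ℤ) * c j - 2 * n1) * (M : ℤ) ^ (j : ℕ)) * (M : ℤ) = 0 := by
      rw [← hfac, heq, hrz]
    exact (mul_eq_zero.mp h0).resolve_right (ne_of_gt hMZ)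
  -- apply the digits lemma
  set e : ℕ → ℤ := fun i => if h : i < k then 2 * (k : ℤ) * c ⟨i, h⟩ - 2 * n1 else 0 with hedef
  have hQ' : ∑ i ∈ Finset.range k, e i * (M : ℤ) ^ i = 0 := by
    rw [← Fin.sum_univ_eq_sum_range (fun i => e i * (M : ℤ) ^ i) k, ← hQ]
    refine Finset.sum_congr rfl fun j _ => ?_
    simp [hedef, j.isLt]
  have hcb : ∀ j : Fin k, 0 ≤ c j ∧ c j ≤ 2 := by
    intro j
    simp only [hcdef]
    constructor <;> split_ifs <;> norm_num
  have hbnd : ∀ i, i < k → |e i| < (M : ℤ) := by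
    intro i hi
    have hc' := hcb ⟨i, hi⟩
    simp only [hedef, dif_pos hi]
    rw [abs_lt]
    constructor <;> nlinarith
  have hze : ∀ i, i < k → e i = 0 := digits_all_zero (M : ℤ) hMZ k e hbnd hQ'
  have hkc : ∀ j : Fin k, (k : ℤ) * c j = n1 := by
    intro j
    have := hze j j.isLt
    simp only [hedef, dif_pos j.isLt, Fin.eta] at this
    linarith
  have hn1lt : n1 ≤ 2 * (k : ℤ) - 1 := by linarith
  have hcone : ∀ j : Fin k, c j = 1 := by
    intro j
    have h1 := hkc j
    have h2 := hcb j
    have h3 : c j = 0 ∨ c j = 1 ∨ c j = 2 := by omega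
    rcases h3 with h | h | h <;> rw [h] at h1 <;> [skip; skip; skip] <;> omega
  -- conclude
  intro j
  have h1 := hcone j
  rcases hmem (j, false) with ⟨hf1, hf2⟩ | ⟨hf1, hf2⟩ <;>
    rcases hmem (j, true) with ⟨ht1, ht2⟩ | ⟨ht1, ht2⟩ <;>
    simp [hcdef, hf1, ht1] at h1 ⊢ <;> tauto
end

section
/- If the Partition-reduction instance admits an AEF allocation, then there exists Y ⊆ {1, …, k} with Σ_{j∈Y} x_j = T (equivalently, the multiset {x_1, …, x_k} admits an equal-sum partition). -/
open Finset

/-- Digits bounded by `B < (M-1)/2` representing `0` are all zero. -/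
lemma digit_lemma (M B : ℤ) (hB : 0 ≤ B) (hM : 2 * B + 1 ≤ M) :
    ∀ n (d : ℕ → ℤ), (∀ j, |d j| ≤ B) → (∑ j ∈ Finset.range n, d j * M ^ j) = 0 →
      ∀ j < n, d j = 0 := by
  intro n
  induction n with
  | zero => intro d _ _ j hj; omega
  | succ n ih =>
    intro d hd hsum j hj
    rw [Finset.sum_range_succ'] at hsum
    simp only [pow_succ, pow_zero, one_mul, mul_one] at hsum
    have hfac : ∑ i ∈ Finset.range n, d (i + 1) * (M ^ i * M)
        = (∑ i ∈ Finset.range n, d (i + 1) * M ^ i) * M := by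
      rw [Finset.sum_mul]
      exact Finset.sum_congr rfl fun i _ => (mul_assoc _ _ _).symm
    have hsum' : (∑ i ∈ Finset.range n, d (i + 1) * M ^ i) * M + d 0 = 0 := by
      rw [← hfac]; exact hsum
    have hdvd : M ∣ d 0 := ⟨-(∑ i ∈ Finset.range n, d (i + 1) * M ^ i), by linarith⟩
    have h0 : d 0 = 0 :=
      Int.eq_zero_of_abs_lt_dvd hdvd (lt_of_le_of_lt (hd 0) (by linarith))
    rcases Nat.eq_zero_or_pos j with hj0 | hjpos
    · rw [hj0]; exact h0
    · obtain ⟨j', rfl⟩ := Nat.exists_eq_succ_of_ne_zero (by omega : j ≠ 0)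
      have hMne : M ≠ 0 := by intro h; rw [h] at hM; linarith
      have hrest : (∑ i ∈ Finset.range n, d (i + 1) * M ^ i) = 0 := by
        rw [h0, add_zero] at hsum'
        exact (mul_eq_zero.mp hsum').resolve_right hMne
      exact ih (fun i => d (i + 1)) (fun i => hd (i + 1)) hrest j' (by omega)

set_option maxHeartbeats 1600000 in
/-- If the Partition-reduction instance admits an AEF allocation, then the multiset
`{x_1, …, x_k}` admits an equal-sum partition. -/
theorem partition_reduction_backward (k T : ℕ) (hk : 4 ≤ k) (hT : 4 ≤ T)
    (x : Fin k → ℕ) (hsum : ∑ j, x j = 2 * T)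
    (hex : ∃ A1 A2 : Finset (Fin k × Bool),
      Disjoint A1 A2 ∧ A1 ∪ A2 = Finset.univ ∧
      avgVal (pv k T x) A1 = avgVal (pv k T x) A2) :
    ∃ Y : Finset (Fin k), ∑ j ∈ Y, x j = T := by
  obtain ⟨A1, A2, hdis, huniv, havg⟩ := hex
  haveI : Nonempty (Fin k) := ⟨⟨0, by omega⟩⟩
  set Mn : ℕ := T ^ 2 * k ^ 2 with hMn
  -- natural-number valuation
  set nv : Fin k × Bool → ℕ := fun p => Mn ^ ((p.1 : ℕ) + 1) + (if p.2 then x p.1 else 0)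
    with hnv
  have hpv : ∀ p, pv k T x p = (nv p : ℝ) := by
    intro p
    simp only [pv, hnv, hMn]
    push_cast
    by_cases hb : p.2 <;> simp [hb]
  have hMpos : 0 < Mn := by
    have : 0 < T := by omega
    have : 0 < k := by omega
    positivity
  have hnvpos : ∀ p, 0 < nv p := by
    intro p
    have : 0 < Mn ^ ((p.1 : ℕ) + 1) := pow_pos hMpos _
    simp only [hnv]
    omega
  -- both bundles nonempty
  have hsumA : ∀ S : Finset (Fin k × Bool), (∑ p ∈ S, pv k T x p) = ((∑ p ∈ S, nv p : ℕ) : ℝ) := by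
    intro S
    rw [Nat.cast_sum]
    exact Finset.sum_congr rfl fun p _ => hpv p
  have hne : ∀ S : Finset (Fin k × Bool), S.Nonempty → 0 < avgVal (pv k T x) S := by
    intro S hS
    apply div_pos
    · rw [hsumA]
      have : 0 < ∑ p ∈ S, nv p := Finset.sum_pos (fun p _ => hnvpos p) hS
      exact_mod_cast this
    · exact_mod_cast Finset.card_pos.mpr hS
  have hA1ne : A1.Nonempty := by
    by_contra h
    rw [Finset.not_nonempty_iff_eq_empty] at h
    subst h
    rw [Finset.empty_union] at huniv
    have h2 : A2.Nonempty := huniv ▸ Finset.univ_nonempty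
    have := hne A2 h2
    rw [← havg] at this
    simp [avgVal] at this
  have hA2ne : A2.Nonempty := by
    by_contra h
    rw [Finset.not_nonempty_iff_eq_empty] at h
    subst h
    rw [Finset.union_empty] at huniv
    have h1 : A1.Nonempty := huniv ▸ Finset.univ_nonempty
    have := hne A1 h1
    rw [havg] at this
    simp [avgVal] at this
  set a := A1.card with ha
  set b := A2.card with hb
  set N1 := ∑ p ∈ A1, nv p with hN1
  set N2 := ∑ p ∈ A2, nv p with hN2
  have hapos : 0 < a := Finset.card_pos.mpr hA1ne
  have hbpos : 0 < b := Finset.card_pos.mpr hA2ne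
  have hab : a + b = 2 * k := by
    rw [ha, hb, ← Finset.card_union_of_disjoint hdis, huniv, Finset.card_univ]
    simp [Fintype.card_prod]
    ring
  -- from the avg equality, get N1 * b = N2 * a in ℕ
  have hkey : N1 * b = N2 * a := by
    have h := havg
    unfold avgVal at h
    rw [hsumA, hsumA, ← hN1, ← hN2, ← ha, ← hb] at h
    rw [div_eq_div_iff (show (a : ℝ) ≠ 0 from Nat.cast_ne_zero.mpr (by omega))
      (show (b : ℝ) ≠ 0 from Nat.cast_ne_zero.mpr (by omega))] at h
    exact_mod_cast h
  have hNtot : N1 + N2 = ∑ p : Fin k × Bool, nv p := by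
    rw [hN1, hN2, ← Finset.sum_union hdis, huniv]
  -- 2k * N1 = a * (N1 + N2)
  have hmain : 2 * k * N1 = a * (N1 + N2) := by
    calc 2 * k * N1 = (a + b) * N1 := by rw [hab]
    _ = a * N1 + N1 * b := by ring
    _ = a * N1 + N2 * a := by rw [hkey]
    _ = a * (N1 + N2) := by ring
  -- decompositions
  classical
  set c : Fin k → ℕ := fun j => (A1.filter (fun p => p.1 = j)).card with hc
  set Y : Finset (Fin k) := Finset.univ.filter (fun j => (j, true) ∈ A1) with hY
  set X := ∑ j ∈ Y, x j with hX
  have hcle : ∀ j, c j ≤ 2 := by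
    intro j
    have hsub : A1.filter (fun p => p.1 = j) ⊆ {(j, false), (j, true)} := by
      intro p hp
      rw [Finset.mem_filter] at hp
      rcases p with ⟨p1, p2⟩
      simp only at hp
      rcases hp.2 with rfl
      cases p2 <;> simp
    calc c j ≤ ({(j, false), (j, true)} : Finset (Fin k × Bool)).card :=
          Finset.card_le_card hsub
    _ ≤ 2 := Finset.card_insert_le _ _ |>.trans (by simp)
  have hXle : X ≤ 2 * T := by
    rw [hX, ← hsum]
    exact Finset.sum_le_sum_of_subset (Finset.subset_univ Y)
  -- N1 = ∑ j, c j * Mn^(j+1) + X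
  have hdecomp : N1 = (∑ j : Fin k, c j * Mn ^ ((j : ℕ) + 1)) + X := by
    rw [hN1, hnv]
    rw [Finset.sum_add_distrib]
    congr 1
    · rw [← Finset.sum_fiberwise A1 Prod.fst (fun p => Mn ^ ((p.1 : ℕ) + 1))]
      apply Finset.sum_congr rfl
      intro j _
      rw [Finset.sum_congr rfl (fun p hp => ?_), Finset.sum_const, smul_eq_mul]
      rw [Finset.mem_filter] at hp
      rw [hp.2]
    · rw [← Finset.sum_filter]
      have himg : A1.filter (fun p => p.2 = true) = Y.image (fun j => (j, true)) := by
        ext p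
        simp only [Finset.mem_filter, Finset.mem_image, hY, Finset.mem_univ, true_and]
        constructor
        · rintro ⟨hp, h2⟩
          exact ⟨p.1, by rwa [← h2, Prod.mk.eta], by rw [← h2, Prod.mk.eta]⟩
        · rintro ⟨j, hj, rfl⟩
          exact ⟨hj, rfl⟩
      rw [himg, Finset.sum_image (by intro u _ w _ h; simpa using h)]
  have hNtoteq : N1 + N2 = (∑ j : Fin k, 2 * Mn ^ ((j : ℕ) + 1)) + 2 * T := by
    rw [hNtot, Fintype.sum_prod_type, ← hsum]
    rw [← Finset.sum_add_distrib]
    apply Finset.sum_congr rfl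
    intro j _
    simp [hnv]
    ring
  -- integer equation
  have hint : (∑ j : Fin k, ((2 * k * c j : ℤ) - 2 * a) * (Mn : ℤ) ^ ((j : ℕ) + 1))
      = 2 * a * T - 2 * k * X := by
    have h := hmain
    rw [hNtoteq, hdecomp] at h
    have h' : (2 * k * ((∑ j : Fin k, c j * Mn ^ ((j : ℕ) + 1)) + X) : ℤ)
        = a * ((∑ j : Fin k, 2 * Mn ^ ((j : ℕ) + 1)) + 2 * T) := by exact_mod_cast h
    push_cast at h'
    have e : (∑ j : Fin k, ((2 * k * c j : ℤ) - 2 * a) * (Mn : ℤ) ^ ((j : ℕ) + 1))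
        = 2 * (k : ℤ) * (∑ j : Fin k, (c j : ℤ) * (Mn : ℤ) ^ ((j : ℕ) + 1))
          - (a : ℤ) * (∑ j : Fin k, 2 * (Mn : ℤ) ^ ((j : ℕ) + 1)) := by
      rw [Finset.mul_sum, Finset.mul_sum, ← Finset.sum_sub_distrib]
      exact Finset.sum_congr rfl fun j _ => by push_cast; ring
    rw [e]
    linarith [h']
  -- set up digits
  set d : ℕ → ℤ := fun i =>
    if h : i = 0 then 2 * (k : ℤ) * X - 2 * a * T
    else if h2 : i - 1 < k then 2 * k * c ⟨i - 1, h2⟩ - 2 * a else 0 with hd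
  have hdsucc : ∀ (j : ℕ) (h2 : j < k), d (j + 1) = 2 * k * c ⟨j, h2⟩ - 2 * a := by
    intro j h2
    simp only [hd, Nat.add_sub_cancel]
    rw [dif_neg (Nat.succ_ne_zero j), dif_pos h2]
  have hdsum : ∑ i ∈ Finset.range (k + 1), d i * (Mn : ℤ) ^ i = 0 := by
    rw [Finset.sum_range_succ']
    have : ∑ i ∈ Finset.range k, d (i + 1) * (Mn : ℤ) ^ (i + 1)
        = ∑ j : Fin k, ((2 * k * c j : ℤ) - 2 * a) * (Mn : ℤ) ^ ((j : ℕ) + 1) := by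
      rw [Finset.sum_range fun i => d (i + 1) * (Mn : ℤ) ^ (i + 1)]
      apply Finset.sum_congr rfl
      intro j _
      rw [hdsucc (j : ℕ) j.isLt]
    rw [this, hint]
    simp only [hd, dif_pos rfl, pow_zero, mul_one]
    ring
  have hale : a ≤ 2 * k := by omega
  have hdbd : ∀ i, |d i| ≤ 4 * (k : ℤ) * T := by
    intro i
    have hk' : (4 : ℤ) ≤ k := by exact_mod_cast hk
    have hT' : (4 : ℤ) ≤ T := by exact_mod_cast hT
    rw [abs_le]
    rcases Nat.eq_zero_or_pos i with rfl | hipos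
    rotate_left
    · rcases Nat.lt_or_ge (i - 1) k with h2 | h2
      · rw [show i = (i-1) + 1 by omega, hdsucc (i-1) h2]
        have hc' : (c ⟨i - 1, h2⟩ : ℤ) ≤ 2 := by exact_mod_cast hcle _
        have ha' : (a : ℤ) ≤ 2 * k := by exact_mod_cast hale
        have hcpos : (0 : ℤ) ≤ c ⟨i - 1, h2⟩ := Int.natCast_nonneg _
        have hapos' : (0 : ℤ) ≤ a := Int.natCast_nonneg _
        constructor <;> nlinarith
      · rw [show i = (i-1) + 1 by omega]
        simp only [hd, Nat.add_sub_cancel]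
        rw [dif_neg (Nat.succ_ne_zero _), dif_neg (by omega)]
        constructor <;> nlinarith
    simp only [hd, dif_pos rfl]
    have hX' : (X : ℤ) ≤ 2 * T := by exact_mod_cast hXle
    have ha' : (a : ℤ) ≤ 2 * k := by exact_mod_cast hale
    have hXpos : (0 : ℤ) ≤ X := Int.natCast_nonneg _
    have hapos' : (0 : ℤ) ≤ a := Int.natCast_nonneg _
    constructor <;> nlinarith
  have hMbig : 2 * (4 * (k : ℤ) * T) + 1 ≤ (Mn : ℤ) := by
    have hk' : (4 : ℤ) ≤ k := by exact_mod_cast hk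
    have hT' : (4 : ℤ) ≤ T := by exact_mod_cast hT
    have hMeq : (Mn : ℤ) = (T : ℤ) ^ 2 * (k : ℤ) ^ 2 := by rw [hMn]; push_cast; ring
    rw [hMeq]
    have h16 : (16 : ℤ) ≤ (k : ℤ) * T := by nlinarith
    have h17 : 16 * ((k : ℤ) * T) ≤ ((k : ℤ) * T) * ((k : ℤ) * T) :=
      mul_le_mul_of_nonneg_right h16 (by linarith)
    have h18 : (T : ℤ) ^ 2 * (k : ℤ) ^ 2 = ((k : ℤ) * T) * ((k : ℤ) * T) := by ring
    linarith
  have hzero := digit_lemma (Mn : ℤ) (4 * (k : ℤ) * T)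
    (by positivity) hMbig (k + 1) d hdbd hdsum
  -- extract: c j = 1 for j = 0 hence a = k
  have hc0 : 2 * (k : ℤ) * c (⟨0, by omega⟩ : Fin k) - 2 * a = 0 := by
    have := hzero 1 (by omega)
    rwa [show (1:ℕ) = 0 + 1 from rfl, hdsucc 0 (by omega)] at this
  have hak : a = k := by
    have hc2 := hcle (⟨0, by omega⟩ : Fin k)
    set cv := c (⟨0, by omega⟩ : Fin k) with hcv
    have : 2 * k * cv = 2 * a := by exact_mod_cast (by linarith [hc0] : (2 * k * cv : ℤ) = 2 * a)
    interval_cases cv <;> omega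
  have hd0 : 2 * (k : ℤ) * X - 2 * a * T = 0 := by
    have := hzero 0 (by omega)
    simpa [hd] using this
  refine ⟨Y, ?_⟩
  have : 2 * k * X = 2 * k * T := by
    have : (2 * k * X : ℤ) = 2 * k * T := by rw [hak] at hd0; push_cast; linarith
    exact_mod_cast this
  have hkpos : 0 < 2 * k := by omega
  exact Nat.eq_of_mul_eq_mul_left hkpos this
end

section
/- In the Equal-cardinality-Partition-reduction instance, suppose Y ⊆ {1, …, 2k} satisfies |Y| = k and Σ_{j∈Y} x_j = T. Then the allocation with A_1 = {g_j : j ∈ Y} plus two zero-valued items of M₃, A_2 = {g_j : j ∉ Y} plus two zero-valued items of M₃, and A_3 = M₂ plus the remaining zero-valued item of M₃, gives every agent exactly k+2 items (so it satisfies the quota), satisfies u(A_1) = u(A_2) = T'/(k+2) and u(A_3) = T'/(k+1), and is AEF-1. -/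
open Finset

/-- The item type of the Equal-cardinality-Partition-reduction instance:
`2k` items of `M₁`, `k+1` items of `M₂`, and five zero-valued items of `M₃`. -/
abbrev ECP (k : ℕ) := Fin (2 * k) ⊕ (Fin (k + 1) ⊕ Fin 5)

/-- The identical valuation of the Equal-cardinality-Partition-reduction instance:
`v(g_j) = x_j + k²T²`, each item of `M₂` has value `(k+2)T'/(k+1)²` where
`T' = T + k³T²`, and the items of `M₃` have value `0`. -/
noncomputable def ecpVal (k T : ℕ) (x : Fin (2 * k) → ℕ) : ECP k → ℝ
  | Sum.inl j => (x j : ℝ) + (k : ℝ) ^ 2 * (T : ℝ) ^ 2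
  | Sum.inr (Sum.inl _) =>
      ((k : ℝ) + 2) * ((T : ℝ) + (k : ℝ) ^ 3 * (T : ℝ) ^ 2) / ((k : ℝ) + 1) ^ 2
  | Sum.inr (Sum.inr _) => 0

/-- The five zero-valued items of `M₃`, as a subset of all items. -/
def zeroItems (k : ℕ) : Finset (ECP k) :=
  Finset.univ.image (fun z : Fin 5 => Sum.inr (Sum.inr z))

/-- The `k+1` items of `M₂`, as a subset of all items. -/
def midItems (k : ℕ) : Finset (ECP k) :=
  Finset.univ.image (fun b : Fin (k + 1) => Sum.inr (Sum.inl b))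

/-- `A` is an allocation among three agents: pairwise disjoint bundles covering all items. -/
def IsAlloc3 (k : ℕ) (A : Fin 3 → Finset (ECP k)) : Prop :=
  (∀ i j : Fin 3, i ≠ j → Disjoint (A i) (A j)) ∧ Finset.univ.biUnion A = Finset.univ

/-- AEF-1 for three agents with the identical valuation `v`: for every pair of agents
there is an item in the union of the two bundles whose removal eliminates the envy. -/
def AEF1id (k : ℕ) (v : ECP k → ℝ) (A : Fin 3 → Finset (ECP k)) : Prop :=
  ∀ i h : Fin 3,
    ∃ g ∈ A i ∪ A h, avgVal v ((A h).erase g) ≤ avgVal v ((A i).erase g)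
set_option maxHeartbeats 1600000 in
/-- Given an equal-cardinality equal-sum subset `Y`, the explicit allocation
(`A₁ = {g_j : j ∈ Y}` plus two zeros, `A₂ = {g_j : j ∉ Y}` plus two zeros,
`A₃ = M₂` plus the remaining zero) gives every agent exactly `k+2` items, has the stated
average values, and is AEF-1. -/
theorem ecp_forward (k T : ℕ) (hk : 4 ≤ k) (hT : 4 ≤ T)
    (x : Fin (2 * k) → ℕ) (hsum : ∑ j, x j = 2 * T)
    (Y : Finset (Fin (2 * k))) (hYcard : Y.card = k) (hYsum : ∑ j ∈ Y, x j = T)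
    (A : Fin 3 → Finset (ECP k))
    (hA : A = ![Y.image Sum.inl ∪ {Sum.inr (Sum.inr 0), Sum.inr (Sum.inr 1)},
                Yᶜ.image Sum.inl ∪ {Sum.inr (Sum.inr 2), Sum.inr (Sum.inr 3)},
                midItems k ∪ {Sum.inr (Sum.inr 4)}]) :
    IsAlloc3 k A ∧
    (∀ i, (A i).card = k + 2) ∧
    avgVal (ecpVal k T x) (A 0)
      = ((T : ℝ) + (k : ℝ) ^ 3 * (T : ℝ) ^ 2) / ((k : ℝ) + 2) ∧
    avgVal (ecpVal k T x) (A 1)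
      = ((T : ℝ) + (k : ℝ) ^ 3 * (T : ℝ) ^ 2) / ((k : ℝ) + 2) ∧
    avgVal (ecpVal k T x) (A 2)
      = ((T : ℝ) + (k : ℝ) ^ 3 * (T : ℝ) ^ 2) / ((k : ℝ) + 1) ∧
    AEF1id k (ecpVal k T x) A := by
  have hA0 : A 0 = Y.image Sum.inl ∪ {Sum.inr (Sum.inr 0), Sum.inr (Sum.inr 1)} := by
    rw [hA]; simp
  have hA1 : A 1 = Yᶜ.image Sum.inl ∪ {Sum.inr (Sum.inr 2), Sum.inr (Sum.inr 3)} := by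
    rw [hA]; simp
  have hA2 : A 2 = midItems k ∪ {Sum.inr (Sum.inr 4)} := by
    rw [hA]; simp
  set v : ECP k → ℝ := ecpVal k T x with hv
  set T' : ℝ := (T : ℝ) + (k : ℝ) ^ 3 * (T : ℝ) ^ 2 with hT'def
  have hkpos : (0:ℝ) < (k:ℝ) := by
    have : (0:ℕ) < k := by omega
    exact_mod_cast this
  have hTpos : (0:ℝ) < (T:ℝ) := by
    have : (0:ℕ) < T := by omega
    exact_mod_cast this
  have hT'pos : 0 < T' := by rw [hT'def]; positivity
  -- cardinalities of the pieces
  have hYccard : Yᶜ.card = k := by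
    rw [Finset.card_compl, hYcard]
    simp; omega
  have hYcsum : ∑ j ∈ Yᶜ, x j = T := by
    have := Finset.sum_add_sum_compl Y x
    rw [hYsum, hsum] at this
    omega
  -- sums over pieces
  have hsumY : ∀ (Z : Finset (Fin (2*k))), Z.card = k → (∑ j ∈ Z, x j = T) →
      ∑ g ∈ Z.image (Sum.inl : Fin (2*k) → ECP k), v g = T' := by
    intro Z hZc hZs
    rw [Finset.sum_image (fun a _ b _ h => Sum.inl_injective h)]
    have hcast : ∑ j ∈ Z, ((x j : ℝ)) = (T : ℝ) := by
      exact_mod_cast congrArg (Nat.cast : ℕ → ℝ) hZs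
    have : ∑ j ∈ Z, v (Sum.inl j) = ∑ j ∈ Z, ((x j : ℝ) + (k:ℝ)^2*(T:ℝ)^2) := rfl
    rw [this, Finset.sum_add_distrib, Finset.sum_const, hZc, hcast, hT'def,
      nsmul_eq_mul]
    push_cast
    ring
  have hsumMid : ∑ g ∈ midItems k, v g = ((k:ℝ)+2) * T' / ((k:ℝ)+1) := by
    rw [midItems, Finset.sum_image (fun a _ b _ h => by simpa using h)]
    have : ∀ b : Fin (k+1), v (Sum.inr (Sum.inl b))
        = ((k:ℝ)+2) * T' / ((k:ℝ)+1)^2 := fun b => rfl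
    rw [Finset.sum_congr rfl (fun b _ => this b), Finset.sum_const, Finset.card_univ,
      Fintype.card_fin, nsmul_eq_mul]
    have h1 : (0:ℝ) < (k:ℝ)+1 := by linarith
    push_cast
    field_simp
  have hvz : ∀ z : Fin 5, v (Sum.inr (Sum.inr z)) = 0 := fun z => rfl
  -- disjointness lemmas
  have hdisj01 : Disjoint (A 0) (A 1) := by
    rw [hA0, hA1, Finset.disjoint_union_left, Finset.disjoint_union_right,
      Finset.disjoint_union_right]
    refine ⟨⟨?_, ?_⟩, ?_, ?_⟩
    · rw [Finset.disjoint_image Sum.inl_injective]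
      exact disjoint_compl_right
    · simp [Finset.disjoint_left]
    · simp [Finset.disjoint_left]
    · simp [Finset.disjoint_left]
  have hdisj02 : Disjoint (A 0) (A 2) := by
    rw [hA0, hA2, Finset.disjoint_union_left, Finset.disjoint_union_right,
      Finset.disjoint_union_right]
    refine ⟨⟨?_, ?_⟩, ?_, ?_⟩
    · simp [Finset.disjoint_left, midItems]
    · simp [Finset.disjoint_left]
    · simp [Finset.disjoint_left, midItems]
    · simp [Finset.disjoint_left]
  have hdisj12 : Disjoint (A 1) (A 2) := by
    rw [hA1, hA2, Finset.disjoint_union_left, Finset.disjoint_union_right,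
      Finset.disjoint_union_right]
    refine ⟨⟨?_, ?_⟩, ?_, ?_⟩
    · simp [Finset.disjoint_left, midItems]
    · simp [Finset.disjoint_left]
    · simp [Finset.disjoint_left, midItems]
    · simp [Finset.disjoint_left]
  -- cards
  have hc0 : (A 0).card = k + 2 := by
    rw [hA0, Finset.card_union_of_disjoint (by simp [Finset.disjoint_left]),
      Finset.card_image_of_injective _ Sum.inl_injective, hYcard]
    simp
  have hc1 : (A 1).card = k + 2 := by
    rw [hA1, Finset.card_union_of_disjoint (by simp [Finset.disjoint_left]),
      Finset.card_image_of_injective _ Sum.inl_injective, hYccard]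
    simp
  have hc2 : (A 2).card = k + 2 := by
    rw [hA2, Finset.card_union_of_disjoint (by simp [Finset.disjoint_left, midItems]),
      midItems, Finset.card_image_of_injective _ (fun a b h => by simpa using h),
      Finset.card_univ, Fintype.card_fin]
    simp
  -- sums over bundles
  have hs0 : ∑ g ∈ A 0, v g = T' := by
    rw [hA0, Finset.sum_union (by simp [Finset.disjoint_left]),
      hsumY Y hYcard hYsum, Finset.sum_pair (by simp)]
    rw [hvz, hvz]; ring
  have hs1 : ∑ g ∈ A 1, v g = T' := by
    rw [hA1, Finset.sum_union (by simp [Finset.disjoint_left]),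
      hsumY Yᶜ hYccard hYcsum, Finset.sum_pair (by simp)]
    rw [hvz, hvz]; ring
  have hs2 : ∑ g ∈ A 2, v g = ((k:ℝ)+2) * T' / ((k:ℝ)+1) := by
    rw [hA2, Finset.sum_union (by simp [Finset.disjoint_left, midItems]),
      hsumMid, Finset.sum_singleton, hvz]
    ring
  -- average values
  have hu0 : avgVal v (A 0) = T' / ((k:ℝ)+2) := by
    rw [avgVal, hs0, hc0]; push_cast; ring
  have hu1 : avgVal v (A 1) = T' / ((k:ℝ)+2) := by
    rw [avgVal, hs1, hc1]; push_cast; ring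
  have hu2 : avgVal v (A 2) = T' / ((k:ℝ)+1) := by
    rw [avgVal, hs2, hc2]
    have h1 : ((k:ℝ)+1) ≠ 0 := by linarith
    have h2 : ((k:ℝ)+2) ≠ 0 := by linarith
    push_cast
    field_simp
  -- membership of chosen zero items
  have hg0 : (Sum.inr (Sum.inr 0) : ECP k) ∈ A 0 := by rw [hA0]; simp
  have hg1 : (Sum.inr (Sum.inr 2) : ECP k) ∈ A 1 := by rw [hA1]; simp
  have hg2 : (Sum.inr (Sum.inr 4) : ECP k) ∈ A 2 := by rw [hA2]; simp
  have hg0n1 : (Sum.inr (Sum.inr 0) : ECP k) ∉ A 1 := by rw [hA1]; simp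
  have hg0n2 : (Sum.inr (Sum.inr 0) : ECP k) ∉ A 2 := by rw [hA2]; simp [midItems]
  have hg1n0 : (Sum.inr (Sum.inr 2) : ECP k) ∉ A 0 := by rw [hA0]; simp
  have hg1n2 : (Sum.inr (Sum.inr 2) : ECP k) ∉ A 2 := by rw [hA2]; simp [midItems]
  have hg2n0 : (Sum.inr (Sum.inr 4) : ECP k) ∉ A 0 := by rw [hA0]; simp
  have hg2n1 : (Sum.inr (Sum.inr 4) : ECP k) ∉ A 1 := by rw [hA1]; simp
  -- erase averages
  have herase : ∀ (i : Fin 3) (z : Fin 5), (Sum.inr (Sum.inr z) : ECP k) ∈ A i →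
      avgVal v ((A i).erase (Sum.inr (Sum.inr z)))
        = (∑ g ∈ A i, v g) / (((A i).card - 1 : ℕ) : ℝ) := by
    intro i z hmem
    rw [avgVal, Finset.sum_erase_eq_sub hmem, hvz, Finset.card_erase_of_mem hmem]
    ring_nf
  have he0 : avgVal v ((A 0).erase (Sum.inr (Sum.inr 0))) = T' / ((k:ℝ)+1) := by
    rw [herase 0 0 hg0, hs0, hc0]
    norm_num
  have he1 : avgVal v ((A 1).erase (Sum.inr (Sum.inr 2))) = T' / ((k:ℝ)+1) := by
    rw [herase 1 2 hg1, hs1, hc1]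
    norm_num
  have he2 : avgVal v ((A 2).erase (Sum.inr (Sum.inr 4)))
      = ((k:ℝ)+2) * T' / ((k:ℝ)+1)^2 := by
    rw [herase 2 4 hg2, hs2, hc2]
    have h1 : ((k:ℝ)+1) ≠ 0 := by linarith
    norm_num
    push_cast
    field_simp
  -- key inequalities
  have hineq1 : T' / ((k:ℝ)+2) ≤ T' / ((k:ℝ)+1) := by
    rw [div_le_div_iff₀ (by linarith : (0:ℝ) < (k:ℝ)+2) (by linarith : (0:ℝ) < (k:ℝ)+1)]
    nlinarith [hT'pos.le]
  have hineq2 : T' / ((k:ℝ)+2) ≤ ((k:ℝ)+2) * T' / ((k:ℝ)+1)^2 := by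
    have hp1 : (0:ℝ) < (k:ℝ)+2 := by linarith
    have hp2 : (0:ℝ) < ((k:ℝ)+1)^2 := by nlinarith
    rw [div_le_div_iff₀ hp1 hp2]
    have key : (0:ℝ) ≤ T' * (2*(k:ℝ)+3) := mul_nonneg hT'pos.le (by linarith)
    nlinarith [key]
  refine ⟨⟨?_, ?_⟩, ?_, ?_, ?_, ?_, ?_⟩
  · intro i j hij
    fin_cases i <;> fin_cases j <;> first
      | exact absurd rfl hij
      | exact hdisj01 | exact hdisj01.symm
      | exact hdisj02 | exact hdisj02.symm
      | exact hdisj12 | exact hdisj12.symm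
  · ext g
    simp only [Finset.mem_biUnion, Finset.mem_univ, iff_true, true_and]
    rcases g with j | b | z
    · by_cases hj : j ∈ Y
      · exact ⟨0, by rw [hA0]; simp [hj]⟩
      · exact ⟨1, by rw [hA1]; simp [hj]⟩
    · exact ⟨2, by rw [hA2]; simp [midItems]⟩
    · fin_cases z
      · exact ⟨0, by rw [hA0]; simp⟩
      · exact ⟨0, by rw [hA0]; simp⟩
      · exact ⟨1, by rw [hA1]; simp⟩
      · exact ⟨1, by rw [hA1]; simp⟩
      · exact ⟨2, by rw [hA2]; simp⟩
  · intro i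
    fin_cases i
    · exact hc0
    · exact hc1
    · exact hc2
  · exact hu0
  · exact hu1
  · exact hu2
  · have c00 : ∃ g ∈ A 0 ∪ A 0, avgVal v ((A 0).erase g) ≤ avgVal v ((A 0).erase g) :=
      ⟨Sum.inr (Sum.inr 0), by simp [hg0], le_refl _⟩
    have c11 : ∃ g ∈ A 1 ∪ A 1, avgVal v ((A 1).erase g) ≤ avgVal v ((A 1).erase g) :=
      ⟨Sum.inr (Sum.inr 2), by simp [hg1], le_refl _⟩
    have c22 : ∃ g ∈ A 2 ∪ A 2, avgVal v ((A 2).erase g) ≤ avgVal v ((A 2).erase g) :=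
      ⟨Sum.inr (Sum.inr 4), by simp [hg2], le_refl _⟩
    have c01 : ∃ g ∈ A 0 ∪ A 1, avgVal v ((A 1).erase g) ≤ avgVal v ((A 0).erase g) := by
      refine ⟨Sum.inr (Sum.inr 0), by simp [hg0], ?_⟩
      rw [Finset.erase_eq_of_notMem hg0n1, he0, hu1]
      exact hineq1
    have c02 : ∃ g ∈ A 0 ∪ A 2, avgVal v ((A 2).erase g) ≤ avgVal v ((A 0).erase g) := by
      refine ⟨Sum.inr (Sum.inr 0), by simp [hg0], ?_⟩
      rw [Finset.erase_eq_of_notMem hg0n2, he0, hu2]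
    have c10 : ∃ g ∈ A 1 ∪ A 0, avgVal v ((A 0).erase g) ≤ avgVal v ((A 1).erase g) := by
      refine ⟨Sum.inr (Sum.inr 2), by simp [hg1], ?_⟩
      rw [Finset.erase_eq_of_notMem hg1n0, he1, hu0]
      exact hineq1
    have c12 : ∃ g ∈ A 1 ∪ A 2, avgVal v ((A 2).erase g) ≤ avgVal v ((A 1).erase g) := by
      refine ⟨Sum.inr (Sum.inr 2), by simp [hg1], ?_⟩
      rw [Finset.erase_eq_of_notMem hg1n2, he1, hu2]
    have c20 : ∃ g ∈ A 2 ∪ A 0, avgVal v ((A 0).erase g) ≤ avgVal v ((A 2).erase g) := by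
      refine ⟨Sum.inr (Sum.inr 4), by simp [hg2], ?_⟩
      rw [Finset.erase_eq_of_notMem hg2n0, he2, hu0]
      exact hineq2
    have c21 : ∃ g ∈ A 2 ∪ A 1, avgVal v ((A 1).erase g) ≤ avgVal v ((A 2).erase g) := by
      refine ⟨Sum.inr (Sum.inr 4), by simp [hg2], ?_⟩
      rw [Finset.erase_eq_of_notMem hg2n1, he2, hu1]
      exact hineq2
    intro i h
    fin_cases i <;> fin_cases h
    · exact c00
    · exact c01
    · exact c02
    · exact c10
    · exact c11
    · exact c12
    · exact c20
    · exact c21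
    · exact c22
end

section
/- In the Equal-cardinality-Partition-reduction instance, every AEF-1 allocation in which each agent receives exactly k+2 items gives each agent at most two of the five zero-valued items of M₃; consequently two agents receive exactly two zero-valued items each and one agent receives exactly one zero-valued item. -/
open Finset

/-! An agent holding three or more of the five zeros keeps at most `k - 1` valuable items among
at least `k + 1` after any removal, while by pigeonhole some other agent holds at most one zero
and so keeps at least `k` valuable items among at most `k + 2`. Every valuable item is worth
between `m = (k+2)T'/(k+1)²` and `k²T² + 2T`, a window so narrow that the first average stays
strictly below the second, whatever item is removed: AEF-1 fails. Hence each agent gets at most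
two zeros, and `5 = 2 + 2 + 1`. -/

section AvgVal

variable {G : Type*} [DecidableEq G] {v : G → ℝ} {Z S : Finset G}

lemma sum_eq_sum_sdiff_of_eq_zero (hZ : ∀ g ∈ Z, v g = 0) :
    ∑ g ∈ S, v g = ∑ g ∈ S \ Z, v g :=
  (sum_subset sdiff_subset fun g hgS hg => hZ g (by simpa [hgS] using hg)).symm

lemma avgVal_le_of_card_sdiff_le {M a n : ℝ} (hZ : ∀ g ∈ Z, v g = 0)
    (hM : ∀ g ∈ S \ Z, v g ≤ M) (hM0 : 0 ≤ M) (ha : ((S \ Z).card : ℝ) ≤ a)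
    (hn : 0 < n) (hnS : n ≤ S.card) :
    avgVal v S ≤ a * M / n := by
  have hsum : ∑ g ∈ S, v g ≤ a * M := calc
    ∑ g ∈ S, v g = ∑ g ∈ S \ Z, v g := sum_eq_sum_sdiff_of_eq_zero hZ
    _ ≤ (S \ Z).card * M := by simpa using sum_le_card_nsmul _ _ _ hM
    _ ≤ a * M := by gcongr
  exact div_le_div₀ (mul_nonneg (le_trans (by positivity) ha) hM0) hsum hn hnS

lemma le_avgVal_of_le_card_sdiff {m a n : ℝ} (hv : ∀ g ∈ S, 0 ≤ v g)
    (hm : ∀ g ∈ S \ Z, m ≤ v g) (hm0 : 0 ≤ m) (ha : a ≤ (S \ Z).card) (hnS : S.card ≤ n) :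
    a * m / n ≤ avgVal v S := by
  have hsum : a * m ≤ ∑ g ∈ S, v g := calc
    a * m ≤ (S \ Z).card * m := by gcongr
    _ ≤ ∑ g ∈ S \ Z, v g := by simpa using card_nsmul_le_sum _ _ _ hm
    _ ≤ ∑ g ∈ S, v g := sum_le_sum_of_subset_of_nonneg sdiff_subset fun g hg _ => hv g hg
  rcases S.eq_empty_or_nonempty with rfl | hS
  · simp only [sum_empty] at hsum
    simp only [avgVal, sum_empty, zero_div]
    exact div_nonpos_of_nonpos_of_nonneg hsum (le_trans (by positivity) hnS)
  calc a * m / n ≤ (∑ g ∈ S, v g) / n := by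
        gcongr
        exact le_trans (by positivity) hnS
    _ ≤ avgVal v S := div_le_div_of_nonneg_left (sum_nonneg hv) (by simpa using hS) hnS

end AvgVal

lemma sum_card_inter_eq_card {ι α : Type*} [Fintype ι] [Fintype α] [DecidableEq α]
    {A : ι → Finset α} (hdisj : ∀ i j, i ≠ j → Disjoint (A i) (A j))
    (hcover : univ.biUnion A = univ) (Z : Finset α) :
    ∑ i, (A i ∩ Z).card = Z.card := by
  rw [← card_biUnion fun i _ j _ hij => (hdisj i j hij).mono inter_subset_left inter_subset_left,
    ← biUnion_inter, hcover, univ_inter]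

lemma exists_eq_one_and_eq_two_of_sum_eq_five {c : Fin 3 → ℕ} (hsum : ∑ i, c i = 5)
    (hle : ∀ i, c i ≤ 2) : ∃ i, c i = 1 ∧ ∀ j, j ≠ i → c j = 2 := by
  rw [Fin.sum_univ_three] at hsum
  have := hle 0; have := hle 1; have := hle 2
  simp only [ne_eq, Fin.forall_fin_succ, Fin.isValue, Fin.succ_zero_eq_one, Fin.succ_one_eq_two,
    IsEmpty.forall_iff, and_true, Fin.exists_fin_succ, not_true_eq_false, one_ne_zero,
    not_false_eq_true, forall_const, Fin.reduceEq, true_and, zero_ne_one, IsEmpty.exists_iff,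
    or_false]
  omega

lemma card_zeroItems (k : ℕ) : (zeroItems k).card = 5 := by
  rw [zeroItems, card_image_of_injective _ fun _ _ h => by simpa using h]
  simp

lemma midVal_le {k T : ℝ} (hk : 2 ≤ k) (hT : 2 ≤ T) :
    (k + 2) * (T + k ^ 3 * T ^ 2) / (k + 1) ^ 2 ≤ k ^ 2 * T ^ 2 := by
  rw [div_le_iff₀ (by positivity)]
  have hk0 : (0 : ℝ) < k := by linarith
  nlinarith [mul_le_mul hk hT (by norm_num) hk0.le, mul_pos hk0 (by linarith : (0 : ℝ) < T)]

lemma ecp_avg_bounds_lt {k T : ℝ} (hk : 2 ≤ k) (hT : 2 ≤ T) :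
    (k - 1) * (k ^ 2 * T ^ 2 + 2 * T) / (k + 1) <
      k * ((k + 2) * (T + k ^ 3 * T ^ 2) / (k + 1) ^ 2) / (k + 2) := by
  rw [div_lt_div_iff₀ (by positivity) (by positivity)]
  field_simp
  nlinarith [mul_pos (by linarith : (0:ℝ) < k) (by linarith : (0:ℝ) < T)]

section Instance

variable {k T : ℕ} {x : Fin (2 * k) → ℕ}

lemma ecpVal_eq_zero_of_mem_zeroItems {g : ECP k} (hg : g ∈ zeroItems k) :
    ecpVal k T x g = 0 := by
  obtain ⟨z, -, rfl⟩ := mem_image.1 hg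
  rfl

lemma ecpVal_nonneg (g : ECP k) : 0 ≤ ecpVal k T x g := by
  rcases g with j | b | z <;> simp only [ecpVal] <;> positivity

lemma ecpVal_le (hk : 2 ≤ k) (hT : 2 ≤ T) (hsum : ∑ j, x j = 2 * T) (g : ECP k) :
    ecpVal k T x g ≤ (k : ℝ) ^ 2 * T ^ 2 + 2 * T := by
  rcases g with j | b | z
  · have hxj : x j ≤ 2 * T := hsum ▸ single_le_sum (fun _ _ => Nat.zero_le _) (mem_univ j)
    have : (x j : ℝ) ≤ 2 * T := by exact_mod_cast hxj
    simp only [ecpVal]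
    linarith
  · have := midVal_le (k := k) (T := T) (by exact_mod_cast hk) (by exact_mod_cast hT)
    simp only [ecpVal]
    linarith
  · simp only [ecpVal]
    positivity

lemma midVal_le_ecpVal (hk : 2 ≤ k) (hT : 2 ≤ T) {g : ECP k} (hg : g ∉ zeroItems k) :
    ((k : ℝ) + 2) * (T + (k : ℝ) ^ 3 * T ^ 2) / ((k : ℝ) + 1) ^ 2 ≤ ecpVal k T x g := by
  rcases g with j | b | z
  · have := midVal_le (k := k) (T := T) (by exact_mod_cast hk) (by exact_mod_cast hT)
    simp only [ecpVal]
    linarith [(Nat.cast_nonneg (x j) : (0 : ℝ) ≤ x j)]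
  · exact le_rfl
  · exact absurd (mem_image_of_mem _ (mem_univ z)) hg

lemma avgVal_erase_lt_of_card_inter_zeroItems (hk : 2 ≤ k) (hT : 2 ≤ T)
    (hsum : ∑ j, x j = 2 * T) {P Q : Finset (ECP k)} (hP : P.card = k + 2) (hQ : Q.card = k + 2)
    (hPZ : 3 ≤ (P ∩ zeroItems k).card) (hQZ : (Q ∩ zeroItems k).card ≤ 1) (g : ECP k) :
    avgVal (ecpVal k T x) (P.erase g) < avgVal (ecpVal k T x) (Q.erase g) := by
  have hPsplit := card_inter_add_card_sdiff P (zeroItems k)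
  have hQsplit := card_inter_add_card_sdiff Q (zeroItems k)
  have hPerase := pred_card_le_card_erase (s := P) (a := g)
  have hQerase := card_erase_le (s := Q) (a := g)
  have hQZerase := pred_card_le_card_erase (s := Q \ zeroItems k) (a := g)
  have hPZerase := card_erase_le (s := P \ zeroItems k) (a := g)
  rw [← erase_sdiff_comm] at hQZerase hPZerase
  have hkR : (2 : ℝ) ≤ k := by exact_mod_cast hk
  have hTR : (2 : ℝ) ≤ T := by exact_mod_cast hT
  have hPval : ((P.erase g \ zeroItems k).card : ℝ) ≤ k - 1 := by
    have : (P.erase g \ zeroItems k).card + 1 ≤ k := by omega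
    have : ((P.erase g \ zeroItems k).card : ℝ) + 1 ≤ k := by exact_mod_cast this
    linarith
  have hPcard : (k : ℝ) + 1 ≤ (P.erase g).card := by
    exact_mod_cast (by omega : k + 1 ≤ (P.erase g).card)
  have hQval : (k : ℝ) ≤ (Q.erase g \ zeroItems k).card := by
    exact_mod_cast (by omega : k ≤ (Q.erase g \ zeroItems k).card)
  have hQcard : ((Q.erase g).card : ℝ) ≤ k + 2 := by
    exact_mod_cast (by omega : (Q.erase g).card ≤ k + 2)
  calc avgVal (ecpVal k T x) (P.erase g)
      ≤ (k - 1) * ((k : ℝ) ^ 2 * T ^ 2 + 2 * T) / (k + 1) :=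
        avgVal_le_of_card_sdiff_le (fun _ => ecpVal_eq_zero_of_mem_zeroItems)
          (fun g _ => ecpVal_le hk hT hsum g) (by positivity) hPval (by positivity) hPcard
    _ < k * (((k : ℝ) + 2) * (T + (k : ℝ) ^ 3 * T ^ 2) / ((k : ℝ) + 1) ^ 2) / (k + 2) :=
        ecp_avg_bounds_lt hkR hTR
    _ ≤ avgVal (ecpVal k T x) (Q.erase g) :=
        le_avgVal_of_le_card_sdiff (fun g _ => ecpVal_nonneg g)
          (fun g hg => midVal_le_ecpVal hk hT (mem_sdiff.1 hg).2) (by positivity) hQval hQcard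

end Instance

lemma card_inter_zeroItems_le_two {k T : ℕ} (hk : 2 ≤ k) (hT : 2 ≤ T)
    {x : Fin (2 * k) → ℕ} (hsum : ∑ j, x j = 2 * T) {A : Fin 3 → Finset (ECP k)}
    (hA : IsAlloc3 k A) (hAEF1 : AEF1id k (ecpVal k T x) A) (hquota : ∀ i, (A i).card = k + 2)
    (i : Fin 3) : (A i ∩ zeroItems k).card ≤ 2 := by
  by_contra! hi
  have hzeros := sum_card_inter_eq_card hA.1 hA.2 (zeroItems k)
  obtain ⟨h, -, hh⟩ := exists_lt_of_sum_lt (s := univ) (g := fun _ => 2)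
    (f := fun i => (A i ∩ zeroItems k).card) (by simp [hzeros, card_zeroItems])
  obtain ⟨g, -, hg⟩ := hAEF1 i h
  exact (avgVal_erase_lt_of_card_inter_zeroItems hk hT hsum (hquota i) (hquota h) hi
    (Nat.le_of_lt_succ hh) g).not_ge hg

/-- In every AEF-1 allocation meeting the quota (`k+2` items per agent), each agent gets
at most two of the five zero-valued items; consequently two agents get exactly two zeros
and one agent gets exactly one zero. -/
theorem ecp_zero_distribution (k T : ℕ) (hk : 4 ≤ k) (hT : 4 ≤ T)
    (x : Fin (2 * k) → ℕ) (hsum : ∑ j, x j = 2 * T)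
    (A : Fin 3 → Finset (ECP k)) (hA : IsAlloc3 k A)
    (hAEF1 : AEF1id k (ecpVal k T x) A)
    (hquota : ∀ i, (A i).card = k + 2) :
    (∀ i, (A i ∩ zeroItems k).card ≤ 2) ∧
    (∃ i : Fin 3, (A i ∩ zeroItems k).card = 1 ∧
      ∀ j : Fin 3, j ≠ i → (A j ∩ zeroItems k).card = 2) := by
  have hle := card_inter_zeroItems_le_two (by omega) (by omega) hsum hA hAEF1 hquota
  refine ⟨hle, exists_eq_one_and_eq_two_of_sum_eq_five ?_ hle⟩
  rw [sum_card_inter_eq_card hA.1 hA.2, card_zeroItems]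
end

section
/- In the Equal-cardinality-Partition-reduction instance, let A be an AEF-1 allocation in which each agent receives exactly k+2 items, agent 3's bundle contains exactly one zero-valued item of M₃, and each of the other two agents' bundles contains exactly two zero-valued items of M₃. Then A_3 consists of all k+1 items of M₂ together with one zero-valued item of M₃. -/
open Finset

lemma keypoly (p t : ℝ) (hp : 4 ≤ p) (ht : 4 ≤ t) :
    0 < 2*p^5*t^2 + 2*p^4*t^2 - p^3*t^2 + p^2*t^2 - 4*p^3*t - 15*p^2*t - 21*p*t - 12*t := by
  have hp0 : (0:ℝ) < p := by linarith
  have ht0 : (0:ℝ) < t := by linarith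
  have h1 : 0 ≤ p^3*t*(t-4) := mul_nonneg (by positivity) (by linarith)
  have h2 : 0 ≤ p^2*t*(p*t-15) := mul_nonneg (by positivity) (by nlinarith)
  have h3 : 0 ≤ p*t*(p^2*t - 21) := mul_nonneg (by positivity) (by nlinarith)
  have h4 : 0 ≤ t*(p^2*t - 12) := mul_nonneg (by positivity) (by nlinarith)
  have h5 : 0 < p^5*t^2 := by positivity
  have h6 : 0 ≤ p^3*t^2*(p - 1) := mul_nonneg (by positivity) (by linarith)
  nlinarith [h1, h2, h3, h4, h5, h6]

lemma keypoly2 (p t : ℝ) (hp : 4 ≤ p) (ht : 4 ≤ t) :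
    0 < 3*p^3*t^2 + 4*p^2*t^2 - 3*p^2*t - 10*p*t - 8*t := by
  have hp0 : (0:ℝ) < p := by linarith
  have ht0 : (0:ℝ) < t := by linarith
  have h1 : 0 ≤ p^2*t*(t - 3) := mul_nonneg (by positivity) (by linarith)
  have h2 : 0 ≤ p*t*(p*t - 10) := mul_nonneg (by positivity) (by nlinarith)
  have h3 : 0 ≤ t*(p^2*t - 8) := mul_nonneg (by positivity) (by nlinarith)
  have h4 : 0 < p^3*t^2 := by positivity
  nlinarith [h1, h2, h3, h4]

lemma key1 (p t : ℝ) (hp : 4 ≤ p) (ht : 4 ≤ t) :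
    (p+1) * (2*t + (2*p-1)*(p^2*t^2) + (p+2)*(t + p^3*t^2)/(p+1)^2)
      < 2*(p+2) * (p*((p+2)*(t + p^3*t^2)/(p+1)^2) - 2*t) := by
  have h1 : (0:ℝ) < (p+1)^2 := by nlinarith
  rw [← sub_pos]
  have h2 : 2*(p+2) * (p*((p+2)*(t + p^3*t^2)/(p+1)^2) - 2*t)
      - (p+1) * (2*t + (2*p-1)*(p^2*t^2) + (p+2)*(t + p^3*t^2)/(p+1)^2)
      = (2*p^5*t^2 + 2*p^4*t^2 - p^3*t^2 + p^2*t^2 - 4*p^3*t - 15*p^2*t - 21*p*t - 12*t)/(p+1)^2 := by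
    field_simp
    ring
  rw [h2]
  exact div_pos (keypoly p t hp ht) h1

lemma key2 (p t : ℝ) (hp : 4 ≤ p) (ht : 4 ≤ t) :
    (p+2) * (2*t + (2*p-1)*(p^2*t^2) + (p+2)*(t + p^3*t^2)/(p+1)^2)
      < 2*(p+1) * (p*((p+2)*(t + p^3*t^2)/(p+1)^2) + p^2*t^2) := by
  have h1 : (0:ℝ) < (p+1)^2 := by nlinarith
  rw [← sub_pos]
  have h2 : 2*(p+1) * (p*((p+2)*(t + p^3*t^2)/(p+1)^2) + p^2*t^2)
      - (p+2) * (2*t + (2*p-1)*(p^2*t^2) + (p+2)*(t + p^3*t^2)/(p+1)^2)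
      = (3*p^3*t^2 + 4*p^2*t^2 - 3*p^2*t - 10*p*t - 8*t)/(p+1)^2 := by
    field_simp
    ring
  rw [h2]
  exact div_pos (keypoly2 p t hp ht) h1

set_option maxHeartbeats 1600000 in
/-- In an AEF-1 allocation meeting the quota in which agent 3 has exactly one zero-valued
item and the other two agents have exactly two zero-valued items each, agent 3's bundle
consists of all `k+1` items of `M₂` together with one zero-valued item. -/
theorem ecp_agent3_gets_mid (k T : ℕ) (hk : 4 ≤ k) (hT : 4 ≤ T)
    (x : Fin (2 * k) → ℕ) (hsum : ∑ j, x j = 2 * T)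
    (A : Fin 3 → Finset (ECP k)) (hA : IsAlloc3 k A)
    (hAEF1 : AEF1id k (ecpVal k T x) A)
    (hquota : ∀ i, (A i).card = k + 2)
    (hz1 : (A 0 ∩ zeroItems k).card = 2)
    (hz2 : (A 1 ∩ zeroItems k).card = 2)
    (hz3 : (A 2 ∩ zeroItems k).card = 1) :
    ∃ z : Fin 5, A 2 = midItems k ∪ {Sum.inr (Sum.inr z)} := by
  classical
  set v := ecpVal k T x with hvdef
  set p : ℝ := (k : ℝ) with hpdef
  set t : ℝ := (T : ℝ) with htdef
  have hp4 : (4:ℝ) ≤ p := by rw [hpdef]; exact_mod_cast hk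
  have ht4 : (4:ℝ) ≤ t := by rw [htdef]; exact_mod_cast hT
  have hp0 : (0:ℝ) < p := by linarith
  have ht0 : (0:ℝ) < t := by linarith
  set E : ℝ := p^2*t^2 with hEdef
  set c : ℝ := (p+2)*(t + p^3*t^2)/(p+1)^2 with hcdef
  have hE0 : 0 ≤ E := by positivity
  have hc0 : 0 ≤ c := by
    rw [hcdef]
    apply div_nonneg (by nlinarith) (by positivity)
  have hcE : c ≤ E := by
    rw [hcdef, hEdef, div_le_iff₀ (by positivity)]
    have h9 : (0:ℝ) ≤ t*(p^2*t - p - 2) := mul_nonneg (by linarith) (by nlinarith)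
    nlinarith [h9]
  -- value lemmas
  have hval_inl : ∀ j, v (Sum.inl j) = (x j : ℝ) + E := fun j => rfl
  have hval_mid : ∀ b, v (Sum.inr (Sum.inl b)) = c := fun b => rfl
  have hval_zero : ∀ z : Fin 5, v (Sum.inr (Sum.inr z)) = 0 := fun z => rfl
  have hv0 : ∀ g, 0 ≤ v g := by
    rintro (j | b | z)
    · rw [hval_inl]; positivity
    · rw [hval_mid]; exact hc0
    · rw [hval_zero]
  have hxle : ∀ j, (x j : ℝ) ≤ 2*t := by
    intro j
    have h := Finset.single_le_sum (f := x) (fun i _ => Nat.zero_le _) (Finset.mem_univ j)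
    rw [hsum] at h
    rw [htdef]
    exact_mod_cast h
  have hvle : ∀ g, v g ≤ E + 2*t := by
    rintro (j | b | z)
    · rw [hval_inl]; linarith [hxle j]
    · rw [hval_mid]; linarith
    · rw [hval_zero]; positivity
  -- the M1 part
  set M1 : Finset (ECP k) := Finset.univ.image Sum.inl with hM1def
  have hsplitset : ∀ S : Finset (ECP k),
      S = (S ∩ M1) ∪ ((S ∩ midItems k) ∪ (S ∩ zeroItems k)) := by
    intro S
    ext g
    rcases g with j | b | z <;>
      simp [hM1def, midItems, zeroItems]
  have hd1 : ∀ S : Finset (ECP k),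
      Disjoint (S ∩ M1) ((S ∩ midItems k) ∪ (S ∩ zeroItems k)) := by
    intro S
    rw [Finset.disjoint_left]
    intro g hg1 hg2
    obtain ⟨j, rfl⟩ : ∃ j, Sum.inl j = g := by
      have := (Finset.mem_inter.mp hg1).2
      simpa [hM1def] using this
    simp [midItems, zeroItems] at hg2
  have hd2 : ∀ S : Finset (ECP k),
      Disjoint (S ∩ midItems k) (S ∩ zeroItems k) := by
    intro S
    rw [Finset.disjoint_left]
    intro g hg1 hg2
    obtain ⟨b, rfl⟩ : ∃ b, Sum.inr (Sum.inl b) = g := by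
      have := (Finset.mem_inter.mp hg1).2
      simpa [midItems] using this
    simp [zeroItems] at hg2
  have hcard3 : ∀ S : Finset (ECP k),
      S.card = (S ∩ M1).card + ((S ∩ midItems k).card + (S ∩ zeroItems k).card) := by
    intro S
    conv_lhs => rw [hsplitset S]
    rw [Finset.card_union_of_disjoint (hd1 S), Finset.card_union_of_disjoint (hd2 S)]
  have hsum3 : ∀ S : Finset (ECP k),
      ∑ g ∈ S, v g = (∑ g ∈ S ∩ M1, v g) + ((S ∩ midItems k).card : ℝ) * c := by
    intro S
    conv_lhs => rw [hsplitset S]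
    rw [Finset.sum_union (hd1 S), Finset.sum_union (hd2 S)]
    have hm : ∑ g ∈ S ∩ midItems k, v g = ((S ∩ midItems k).card : ℝ) * c := by
      have hmm : ∀ a ∈ S ∩ midItems k, v a = c := by
        intro a ha
        obtain ⟨b, rfl⟩ : ∃ b, Sum.inr (Sum.inl b) = a := by
          have := (Finset.mem_inter.mp ha).2
          simpa [midItems] using this
        exact hval_mid b
      rw [Finset.sum_eq_card_nsmul hmm, nsmul_eq_mul]
    have hzr : ∑ g ∈ S ∩ zeroItems k, v g = 0 := by
      apply Finset.sum_eq_zero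
      intro a ha
      obtain ⟨z, rfl⟩ : ∃ z, Sum.inr (Sum.inr z) = a := by
        have := (Finset.mem_inter.mp ha).2
        simpa [zeroItems] using this
      exact hval_zero z
    rw [hm, hzr]
    ring
  -- total value
  have htot : ∑ g : ECP k, v g = 2*t + 2*p*E + (p+1)*c := by
    rw [Fintype.sum_sum_type, Fintype.sum_sum_type]
    have h1 : ∑ j : Fin (2*k), v (Sum.inl j) = 2*t + 2*p*E := by
      simp only [hval_inl]
      rw [Finset.sum_add_distrib, Finset.sum_const, Finset.card_univ, Fintype.card_fin,
        nsmul_eq_mul]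
      have : ∑ j : Fin (2*k), (x j : ℝ) = 2*t := by
        rw [← Nat.cast_sum, hsum]
        push_cast
        ring
      rw [this]
      push_cast
      ring
    have h2 : ∑ b : Fin (k+1), v (Sum.inr (Sum.inl b)) = (p+1)*c := by
      simp only [hval_mid]
      rw [Finset.sum_const, Finset.card_univ, Fintype.card_fin, nsmul_eq_mul]
      push_cast
      ring
    have h3 : ∑ z : Fin 5, v (Sum.inr (Sum.inr z)) = 0 := by
      simp only [hval_zero]
      simp
    rw [h1, h2, h3]
    ring
  clear_value v p t E c
  set V : Fin 3 → ℝ := fun i => ∑ g ∈ A i, v g with hVdef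
  have hVi' : ∀ i, V i = ∑ g ∈ A i, v g := fun _ => rfl
  clear_value V
  have hVsum : V 0 + V 1 + V 2 = 2*t + 2*p*E + (p+1)*c := by
    have hdisj : (↑(Finset.univ : Finset (Fin 3)) : Set (Fin 3)).PairwiseDisjoint A :=
      fun i _ j _ hij => hA.1 i j hij
    have hb := Finset.sum_biUnion (f := v) hdisj
    rw [hA.2] at hb
    rw [← htot, hb, Fin.sum_univ_three, hVi' 0, hVi' 1, hVi' 2]
  have hmidcard : (midItems k).card = k + 1 := by
    rw [midItems, Finset.card_image_of_injective _ (fun a b h => by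
      simpa using h)]
    simp
  have hnmle : (A 2 ∩ midItems k).card ≤ k + 1 :=
    le_trans (Finset.card_le_card Finset.inter_subset_right) (le_of_eq hmidcard)
  rcases eq_or_lt_of_le hnmle with hcase | hcase
  · -- conclusion case
    have hsub : A 2 ∩ midItems k = midItems k :=
      Finset.eq_of_subset_of_card_le Finset.inter_subset_right (by rw [hcase, hmidcard])
    have hmidsub : midItems k ⊆ A 2 := by
      rw [← hsub]; exact Finset.inter_subset_left
    obtain ⟨g0, hg0⟩ := Finset.card_eq_one.mp hz3
    have hg0mem : g0 ∈ A 2 ∩ zeroItems k := by rw [hg0]; exact Finset.mem_singleton_self g0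
    obtain ⟨z, hzeq⟩ : ∃ z, Sum.inr (Sum.inr z) = g0 := by
      have := (Finset.mem_inter.mp hg0mem).2
      simpa [zeroItems] using this
    refine ⟨z, ?_⟩
    have hM1empty : A 2 ∩ M1 = ∅ := by
      apply Finset.card_eq_zero.mp
      have h := hcard3 (A 2)
      rw [hquota 2, hcase, hz3] at h
      omega
    ext g
    constructor
    · intro hg
      rcases g with j | b | z'
      · exfalso
        have : Sum.inl j ∈ A 2 ∩ M1 := by
          rw [Finset.mem_inter]
          exact ⟨hg, by simp [hM1def]⟩
        rw [hM1empty] at this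
        exact absurd this (Finset.notMem_empty _)
      · apply Finset.mem_union_left
        simp [midItems]
      · apply Finset.mem_union_right
        have : Sum.inr (Sum.inr z') ∈ A 2 ∩ zeroItems k := by
          rw [Finset.mem_inter]
          exact ⟨hg, by simp [zeroItems]⟩
        rw [hg0] at this
        rw [Finset.mem_singleton] at this
        rw [this, ← hzeq]
        simp
    · intro hg
      rcases Finset.mem_union.mp hg with hg | hg
      · exact hmidsub hg
      · rw [Finset.mem_singleton] at hg
        rw [hg, hzeq]
        exact (Finset.mem_inter.mp hg0mem).1
  · -- contradiction case
    exfalso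
    have hnmk : (A 2 ∩ midItems k).card ≤ k := by omega
    have hnmR : ((A 2 ∩ midItems k).card : ℝ) ≤ p := by
      rw [hpdef]; exact_mod_cast hnmk
    have hn1 : (A 2 ∩ M1).card + (A 2 ∩ midItems k).card = k + 1 := by
      have h := hcard3 (A 2)
      rw [hquota 2, hz3] at h
      omega
    have hn1R : ((A 2 ∩ M1).card : ℝ) = p + 1 - ((A 2 ∩ midItems k).card : ℝ) := by
      have : (((A 2 ∩ M1).card : ℕ) : ℝ) + ((A 2 ∩ midItems k).card : ℝ) = (k:ℝ) + 1 := by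
        exact_mod_cast congrArg (fun n : ℕ => (n:ℝ)) hn1
      rw [hpdef]; linarith
    have hV2low : p*c + E ≤ V 2 := by
      have h1 : ((A 2 ∩ M1).card : ℝ) * E ≤ ∑ g ∈ A 2 ∩ M1, v g := by
        rw [← nsmul_eq_mul]
        apply Finset.card_nsmul_le_sum
        intro a ha
        obtain ⟨j, rfl⟩ : ∃ j, Sum.inl j = a := by
          have := (Finset.mem_inter.mp ha).2
          simpa [hM1def] using this
        rw [hval_inl]
        have : (0:ℝ) ≤ (x j : ℝ) := Nat.cast_nonneg _
        linarith
      have h2 := hsum3 (A 2)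
      rw [hVi' 2, h2]
      have hprod : 0 ≤ (p - ((A 2 ∩ midItems k).card : ℝ)) * (E - c) :=
        mul_nonneg (by linarith) (by linarith)
      rw [hn1R] at h1
      nlinarith [h1, hprod]
    have main : ∀ i : Fin 3, i ≠ 2 → 2 * V i ≤ V 0 + V 1 → False := by
      intro i hi hVi
      obtain ⟨g, hg, hle⟩ := hAEF1 i 2
      have hdisj := hA.1 i 2 hi
      have hWle : V 0 + V 1 ≤ 2*t + (2*p-1)*E + c := by linarith [hVsum, hV2low]
      have hcardiR : (((A i).card : ℕ) : ℝ) = p + 2 := by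
        rw [hquota i, hpdef]; push_cast; ring
      have hcard2R : (((A 2).card : ℕ) : ℝ) = p + 2 := by
        rw [hquota 2, hpdef]; push_cast; ring
      have hkey1 : (p+1) * (2*t + (2*p-1)*E + c) < 2*(p+2) * (p*c - 2*t) := by
        rw [hEdef, hcdef]; exact key1 p t hp4 ht4
      have hkey2 : (p+2) * (2*t + (2*p-1)*E + c) < 2*(p+1) * (p*c + E) := by
        rw [hEdef, hcdef]; exact key2 p t hp4 ht4
      rcases Finset.mem_union.mp hg with hgi | hg2
      · -- g ∈ A i
        have hgn2 : g ∉ A 2 := Finset.disjoint_left.mp hdisj hgi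
        have e2 : (A 2).erase g = A 2 := Finset.erase_eq_of_notMem hgn2
        have hA2avg : avgVal v ((A 2).erase g) = V 2 / (p+2) := by
          rw [e2]; simp only [avgVal, hcard2R, hVi' 2]
        have hAiavg : avgVal v ((A i).erase g) = (V i - v g) / (p+1) := by
          simp only [avgVal]
          rw [Finset.sum_erase_eq_sub hgi, Finset.card_erase_of_mem hgi, hquota i, hVi' i]
          have : ((k + 2 - 1 : ℕ) : ℝ) = p + 1 := by
            rw [hpdef]; push_cast [show k + 2 - 1 = k + 1 from rfl]; ring
          rw [this]
        rw [hA2avg, hAiavg] at hle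
        rw [div_le_div_iff₀ (by linarith) (by linarith)] at hle
        -- hle : V 2 * (p+1) ≤ (V i - v g) * (p+2)
        have m1 : 2*(p+1)*(p*c+E) ≤ 2*(p+1)*(V 2) := by
          apply mul_le_mul_of_nonneg_left hV2low (by linarith)
        have m3 : (V i - v g) * (p + 2) ≤ V i * (p+2) := by
          have := hv0 g
          nlinarith
        have m4 : 2 * V i * (p+2) ≤ (V 0 + V 1) * (p+2) := by
          apply mul_le_mul_of_nonneg_right hVi (by linarith)
        have m5 : (V 0 + V 1) * (p+2) ≤ (2*t + (2*p-1)*E + c) * (p+2) := by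
          apply mul_le_mul_of_nonneg_right hWle (by linarith)
        linarith [m1, hle, m3, m4, m5, hkey2]
      · -- g ∈ A 2
        have hgni : g ∉ A i := Finset.disjoint_right.mp hdisj hg2
        have ei : (A i).erase g = A i := Finset.erase_eq_of_notMem hgni
        have hAiavg : avgVal v ((A i).erase g) = V i / (p+2) := by
          rw [ei]; simp only [avgVal, hcardiR, hVi' i]
        have hA2avg : avgVal v ((A 2).erase g) = (V 2 - v g) / (p+1) := by
          simp only [avgVal]
          rw [Finset.sum_erase_eq_sub hg2, Finset.card_erase_of_mem hg2, hquota 2, hVi' 2]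
          have : ((k + 2 - 1 : ℕ) : ℝ) = p + 1 := by
            rw [hpdef]; push_cast [show k + 2 - 1 = k + 1 from rfl]; ring
          rw [this]
        rw [hA2avg, hAiavg] at hle
        rw [div_le_div_iff₀ (by linarith) (by linarith)] at hle
        -- hle : (V 2 - v g) * (p+2) ≤ V i * (p+1)
        have m1 : (p*c - 2*t) * (p+2) ≤ (V 2 - v g) * (p+2) := by
          apply mul_le_mul_of_nonneg_right _ (by linarith)
          have := hvle g
          linarith
        have m4 : 2 * V i * (p+1) ≤ (V 0 + V 1) * (p+1) := by
          apply mul_le_mul_of_nonneg_right hVi (by linarith)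
        have m5 : (V 0 + V 1) * (p+1) ≤ (2*t + (2*p-1)*E + c) * (p+1) := by
          apply mul_le_mul_of_nonneg_right hWle (by linarith)
        linarith [m1, hle, m4, m5, hkey1]
    rcases le_total (V 0) (V 1) with h01 | h01
    · exact main 0 (by decide) (by linarith)
    · exact main 1 (by decide) (by linarith)
end

section
/- Let A be an allocation of a set M of m ≥ 1 items among n ≥ 2 agents and let r = m²n². For each agent i fix a removal choice (g_{i,h})_{h≠i}, let S_i be the set of chosen items, M'_i = M \ S_i (assumed nonempty), and a_i = max_{g∈M'_i} v_i(g). For each agent i let v'_i be an additive valuation with v'_i(g) = v_i(g) for g ∈ S_i and v_i(g) ≤ v'_i(g) ≤ v_i(g) + a_i/r for g ∈ M'_i, with average value function u'_i. Suppose that for every ordered pair of agents i ≠ h: if an item g_{i,h} is chosen then u'_i(A_i \ {g_{i,h}}) ≥ u'_i(A_h \ {g_{i,h}}) − a_i/r, and otherwise u'_i(A_i) ≥ u'_i(A_h) − a_i/r. Then A is (1 − 4/(mn))-AEF-1 under the original valuations: for every ordered pair i ≠ h with A_i ∪ A_h ≠ ∅ there exists g ∈ A_i ∪ A_h with u_i(A_i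 \ {g}) ≥ (1 − 4/(mn))·u_i(A_h \ {g}). -/
set_option maxHeartbeats 1000000


open Finset

lemma avg_nn {G : Type*} {v : G → ℝ} {S : Finset G} (h : ∀ g ∈ S, 0 ≤ v g) :
    0 ≤ avgVal v S :=
  div_nonneg (sum_nonneg h) (Nat.cast_nonneg _)

lemma avg_mono {G : Type*} {v w : G → ℝ} (S : Finset G) (h : ∀ g ∈ S, v g ≤ w g) :
    avgVal v S ≤ avgVal w S := by
  unfold avgVal
  rw [div_eq_mul_inv, div_eq_mul_inv]
  exact mul_le_mul_of_nonneg_right (sum_le_sum h) (by positivity)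

lemma avg_shift {G : Type*} {v w : G → ℝ} (S : Finset G) {c : ℝ} (hc : 0 ≤ c)
    (h : ∀ g ∈ S, w g ≤ v g + c) : avgVal w S ≤ avgVal v S + c := by
  rcases S.eq_empty_or_nonempty with rfl | hS
  · simpa [avgVal] using hc
  · have hk : (0:ℝ) < S.card := by exact_mod_cast hS.card_pos
    have h1 : ∑ g ∈ S, w g ≤ (∑ g ∈ S, v g) + S.card * c := by
      calc ∑ g ∈ S, w g ≤ ∑ g ∈ S, (v g + c) := sum_le_sum h
        _ = (∑ g ∈ S, v g) + S.card * c := by rw [sum_add_distrib, sum_const, nsmul_eq_mul]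
    have : avgVal w S ≤ ((∑ g ∈ S, v g) + S.card * c) / S.card := by
      unfold avgVal
      rw [div_eq_mul_inv, div_eq_mul_inv]
      exact mul_le_mul_of_nonneg_right h1 (by positivity)
    calc avgVal w S ≤ ((∑ g ∈ S, v g) + S.card * c) / S.card := this
      _ = avgVal v S + c := by unfold avgVal; field_simp

lemma avg_ge_of_mem {G : Type*} {v : G → ℝ} {S : Finset G} {g0 : G} {aa mm : ℝ}
    (hg : g0 ∈ S) (hnn : ∀ x ∈ S, 0 ≤ v x) (hva : aa ≤ v g0) (ha : 0 ≤ aa)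
    (hcard : (S.card : ℝ) ≤ mm) : aa / mm ≤ avgVal v S := by
  have hk : (0:ℝ) < S.card := by exact_mod_cast (card_pos.2 ⟨g0, hg⟩)
  have hsum : aa ≤ ∑ x ∈ S, v x := le_trans hva (single_le_sum hnn hg)
  exact div_le_div₀ (le_trans ha hsum) hsum hk hcard

lemma avg_erase_max {G : Type*} [DecidableEq G] {v : G → ℝ} {S : Finset G} {g0 : G}
    (hg : g0 ∈ S) (hmax : ∀ x ∈ S, v x ≤ v g0) (hnn : ∀ x ∈ S, 0 ≤ v x) :
    avgVal v (S.erase g0) ≤ avgVal v S := by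
  rcases Nat.eq_zero_or_pos (S.erase g0).card with h0 | h0
  · rw [card_eq_zero.1 h0]
    simpa [avgVal] using avg_nn hnn
  · have hk : 0 < S.card := card_pos.2 ⟨g0, hg⟩
    have hce : (S.erase g0).card = S.card - 1 := card_erase_of_mem hg
    have hk2 : 2 ≤ S.card := by omega
    have hcer : ((S.erase g0).card : ℝ) = (S.card : ℝ) - 1 := by
      rw [hce]; push_cast [Nat.cast_sub (by omega : 1 ≤ S.card)]; ring
    have hsumer : ∑ x ∈ S.erase g0, v x = (∑ x ∈ S, v x) - v g0 :=
      sum_erase_eq_sub hg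
    have hsle : ∑ x ∈ S, v x ≤ (S.card : ℝ) * v g0 := by
      calc ∑ x ∈ S, v x ≤ ∑ _x ∈ S, v g0 := sum_le_sum hmax
        _ = (S.card : ℝ) * v g0 := by rw [sum_const, nsmul_eq_mul]
    unfold avgVal
    rw [hsumer, hcer]
    have hpos1 : (0:ℝ) < (S.card:ℝ) - 1 := by
      have : (2:ℝ) ≤ (S.card:ℝ) := by exact_mod_cast hk2
      linarith
    rw [div_le_div_iff₀ hpos1 (by exact_mod_cast hk)]
    have hkr : (2:ℝ) ≤ (S.card : ℝ) := by exact_mod_cast hk2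
    nlinarith [hsle]

lemma half_avg_of_erase {G : Type*} [DecidableEq G] {v : G → ℝ} {S : Finset G} {g0 : G}
    (hg : g0 ∈ S) (hnn : ∀ x ∈ S, 0 ≤ v x) {c : ℝ} (hc : 0 < c)
    (h : c ≤ avgVal v (S.erase g0)) : c / 2 ≤ avgVal v S := by
  have hk1 : 1 ≤ S.card := card_pos.2 ⟨g0, hg⟩
  have hce : (S.erase g0).card = S.card - 1 := card_erase_of_mem hg
  rcases Nat.lt_or_ge S.card 2 with h2 | h2
  · have : S.card = 1 := by omega
    have : (S.erase g0).card = 0 := by omega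
    rw [card_eq_zero.1 this] at h
    simp [avgVal] at h
    linarith
  · have hcer : ((S.erase g0).card : ℝ) = (S.card : ℝ) - 1 := by
      rw [hce]; push_cast [Nat.cast_sub (by omega : 1 ≤ S.card)]; ring
    have hkr : (2:ℝ) ≤ (S.card : ℝ) := by exact_mod_cast h2
    have hsumer : ∑ x ∈ S.erase g0, v x = (∑ x ∈ S, v x) - v g0 :=
      sum_erase_eq_sub hg
    have hg0nn : 0 ≤ v g0 := hnn g0 hg
    unfold avgVal at h ⊢
    rw [hsumer, hcer] at h
    rw [le_div_iff₀ (by linarith : (0:ℝ) < (S.card:ℝ))]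
    rw [le_div_iff₀ (by linarith : (0:ℝ) < (S.card:ℝ)-1)] at h
    nlinarith

/-- If, under rounded valuations `v'` (which agree with `v` on the chosen removal items
and overestimate `v` by at most `aᵢ/r` elsewhere, where `aᵢ` is the maximum value for `i`
of an item of `M'ᵢ = M \ Sᵢ` and `r = m²n²`), every agent envies every other agent by at
most `aᵢ/r` after removing the chosen item, then the allocation is `(1 - 4/(mn))`-AEF-1
under the original valuations. -/
theorem rounded_envy_approx_aef1 {G : Type*} [DecidableEq G] (M : Finset G) (n m : ℕ)
    (hn : 2 ≤ n) (hm : 1 ≤ m) (hMcard : M.card = m)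
    (v : Fin n → G → ℝ) (hv : ∀ i g, 0 ≤ v i g)
    (A : Fin n → Finset G) (hA : IsAllocation M A)
    (rc : Fin n → Fin n → Option G)
    (hrcmem : ∀ i h : Fin n, i ≠ h → ∀ g : G, rc i h = some g → g ∈ A i ∪ A h)
    (S : Fin n → Finset G)
    (hS : ∀ (i : Fin n) (g : G), g ∈ S i ↔ ∃ h : Fin n, h ≠ i ∧ rc i h = some g)
    (hSne : ∀ i : Fin n, (M \ S i).Nonempty)
    (a : Fin n → ℝ)
    (hamem : ∀ i : Fin n, ∃ g ∈ M \ S i, v i g = a i)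
    (hamax : ∀ i : Fin n, ∀ g ∈ M \ S i, v i g ≤ a i)
    (v' : Fin n → G → ℝ)
    (hv'S : ∀ i : Fin n, ∀ g ∈ S i, v' i g = v i g)
    (hv'lb : ∀ i : Fin n, ∀ g ∈ M \ S i, v i g ≤ v' i g)
    (hv'ub : ∀ i : Fin n, ∀ g ∈ M \ S i,
      v' i g ≤ v i g + a i / ((m : ℝ) ^ 2 * (n : ℝ) ^ 2))
    (henvy : ∀ i h : Fin n, i ≠ h →
      (∀ g : G, rc i h = some g →
        avgVal (v' i) ((A h).erase g) - a i / ((m : ℝ) ^ 2 * (n : ℝ) ^ 2)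
          ≤ avgVal (v' i) ((A i).erase g)) ∧
      (rc i h = none →
        avgVal (v' i) (A h) - a i / ((m : ℝ) ^ 2 * (n : ℝ) ^ 2)
          ≤ avgVal (v' i) (A i))) :
    ∀ i h : Fin n, i ≠ h → (A i ∪ A h).Nonempty →
      ∃ g ∈ A i ∪ A h,
        (1 - 4 / ((m : ℝ) * (n : ℝ))) * avgVal (v i) ((A h).erase g)
          ≤ avgVal (v i) ((A i).erase g) := by
  intro i h hih hne
  have hm1 : (1:ℝ) ≤ (m:ℝ) := by exact_mod_cast hm
  have hn2 : (2:ℝ) ≤ (n:ℝ) := by exact_mod_cast hn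
  have hmpos : (0:ℝ) < (m:ℝ) := by linarith
  have hnpos : (0:ℝ) < (n:ℝ) := by linarith
  set ai := a i with hai
  set ε := ai / ((m:ℝ)^2 * (n:ℝ)^2) with hεdef
  set D := (4:ℝ) / ((m:ℝ) * (n:ℝ)) with hDdef
  have hD0 : 0 ≤ D := by rw [hDdef]; positivity
  obtain ⟨gs, hgsM0, hgsval⟩ := hamem i
  have ha0 : 0 ≤ ai := by rw [hai, ← hgsval]; exact hv i gs
  have hε0 : 0 ≤ ε := by rw [hεdef]; positivity
  have hAsub : ∀ j : Fin n, A j ⊆ M := by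
    intro j
    rw [← hA.2]
    exact subset_biUnion_of_mem A (mem_univ j)
  have hlb : ∀ g ∈ M, v i g ≤ v' i g := by
    intro g hg
    by_cases hgS : g ∈ S i
    · rw [hv'S i g hgS]
    · exact hv'lb i g (mem_sdiff.2 ⟨hg, hgS⟩)
  have hub : ∀ g ∈ M, v' i g ≤ v i g + ε := by
    intro g hg
    by_cases hgS : g ∈ S i
    · rw [hv'S i g hgS]; linarith
    · exact hv'ub i g (mem_sdiff.2 ⟨hg, hgS⟩)
  have hvnn : ∀ g, 0 ≤ v i g := hv i
  have hv'nn : ∀ g ∈ M, 0 ≤ v' i g := fun g hg => le_trans (hvnn g) (hlb g hg)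
  have key1 : ∀ T : Finset G, T ⊆ M → avgVal (v i) T ≤ avgVal (v' i) T :=
    fun T hT => avg_mono T (fun g hg => hlb g (hT hg))
  have key2 : ∀ T : Finset G, T ⊆ M → avgVal (v' i) T ≤ avgVal (v i) T + ε :=
    fun T hT => avg_shift T hε0 (fun g hg => hub g (hT hg))
  have keynn : ∀ T : Finset G, 0 ≤ avgVal (v i) T := fun T => avg_nn (fun g _ => hvnn g)
  have keynn' : ∀ T : Finset G, T ⊆ M → 0 ≤ avgVal (v' i) T :=
    fun T hT => avg_nn (fun g hg => hv'nn g (hT hg))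
  -- trivial case m*n ≤ 4
  by_cases htriv : (m:ℝ) * (n:ℝ) ≤ 4
  · obtain ⟨g0, hg0⟩ := hne
    refine ⟨g0, hg0, ?_⟩
    have h1 : 1 - D ≤ 0 := by
      rw [hDdef, sub_nonpos, le_div_iff₀ (by positivity)]
      linarith
    have h2 := keynn ((A h).erase g0)
    have h3 := keynn ((A i).erase g0)
    nlinarith
  push_neg at htriv
  have hD1 : 0 < 1 - D := by
    rw [hDdef, sub_pos, div_lt_one (by positivity)]; exact htriv
  -- A h empty case
  by_cases hAhe : A h = ∅
  · obtain ⟨g0, hg0⟩ := hne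
    refine ⟨g0, hg0, ?_⟩
    rw [hAhe, erase_empty]
    have hz : avgVal (v i) (∅ : Finset G) = 0 := by simp [avgVal]
    rw [hz, mul_zero]
    exact keynn _
  replace hAhe : (A h).Nonempty := nonempty_iff_ne_empty.2 hAhe
  -- locate gs
  have hgsM : gs ∈ M := (mem_sdiff.1 hgsM0).1
  have hgsS : gs ∉ S i := (mem_sdiff.1 hgsM0).2
  have hgsU : gs ∈ Finset.univ.biUnion A := by rw [hA.2]; exact hgsM
  obtain ⟨j, -, hgsj⟩ := mem_biUnion.1 hgsU
  have hdisj : ∀ p q : Fin n, p ≠ q → ∀ x, x ∈ A p → x ∉ A q := by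
    intro p q hpq x hxp hxq
    exact (Finset.disjoint_left.1 (hA.1 p q hpq)) hxp hxq
  have hv'gs : ai ≤ v' i gs := by rw [hai, ← hgsval]; exact hlb gs hgsM
  have L5 : ∀ T : Finset G, T ⊆ M → gs ∈ T → ai / (m:ℝ) ≤ avgVal (v' i) T := by
    intro T hT hmem
    refine avg_ge_of_mem hmem (fun x hx => hv'nn x (hT hx)) hv'gs ha0 ?_
    calc ((T.card:ℝ)) ≤ (M.card:ℝ) := by exact_mod_cast card_le_card hT
      _ = (m:ℝ) := by rw [hMcard]
  -- B arithmetic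
  set B := ai / (4*(m:ℝ)) with hBdef
  have hB0 : 0 ≤ B := by rw [hBdef]; positivity
  have h4' : (4:ℝ) ≤ (m:ℝ)*(n:ℝ)^2 := by nlinarith
  have hεB : ε ≤ B := by
    rw [hεdef, hBdef, div_le_div_iff₀ (by positivity) (by positivity)]
    nlinarith [mul_nonneg (mul_nonneg ha0 hmpos.le) (sub_nonneg.2 h4')]
  have hXB : ai/(2*((m:ℝ)*(n:ℝ))) ≤ B := by
    rw [hBdef, div_le_div_iff₀ (by positivity) (by positivity)]
    nlinarith [mul_nonneg (mul_nonneg ha0 hmpos.le) (sub_nonneg.2 hn2)]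
  have h4B : ai/(m:ℝ) = 4*B := by
    rw [hBdef]; field_simp
  have hDXgen : ∀ Y : ℝ, ai/(2*((m:ℝ)*(n:ℝ))) ≤ Y → 2*ε ≤ D * Y := by
    intro Y hY
    have e : D * (ai/(2*((m:ℝ)*(n:ℝ)))) = 2*ε := by
      rw [hDdef, hεdef]; field_simp; ring
    calc 2*ε = D * (ai/(2*((m:ℝ)*(n:ℝ)))) := e.symm
      _ ≤ D * Y := mul_le_mul_of_nonneg_left hY hD0
  rcases hg0 : rc i h with - | g
  · -- no removal item chosen for pair (i,h)
    have hXenvy : avgVal (v' i) (A h) - ε ≤ avgVal (v' i) (A i) := (henvy i h hih).2 hg0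
    set X := avgVal (v' i) (A i) with hXdef
    by_cases hX : ai/(2*((m:ℝ)*(n:ℝ))) ≤ X
    · obtain ⟨gmax, hgmaxAh, hgmaxmax⟩ := exists_max_image (A h) (v i) hAhe
      refine ⟨gmax, mem_union_right _ hgmaxAh, ?_⟩
      have e1 : (A i).erase gmax = A i :=
        erase_eq_of_notMem (hdisj h i hih.symm gmax hgmaxAh)
      rw [e1]
      have l1 : avgVal (v i) ((A h).erase gmax) ≤ avgVal (v i) (A h) :=
        avg_erase_max hgmaxAh hgmaxmax (fun x _ => hvnn x)
      have l2 : avgVal (v i) (A h) ≤ avgVal (v' i) (A h) := key1 _ (hAsub h)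
      have l3 : avgVal (v' i) (A i) ≤ avgVal (v i) (A i) + ε := key2 _ (hAsub i)
      have hDX : 2*ε ≤ D * X := hDXgen X hX
      have hL : avgVal (v i) ((A h).erase gmax) ≤ X + ε := by linarith
      have hR : X - ε ≤ avgVal (v i) (A i) := by linarith
      nlinarith [mul_nonneg hD1.le (sub_nonneg.2 hL), mul_nonneg hD0 hε0]
    · exfalso
      push_neg at hX
      have hX0 : 0 ≤ X := keynn' _ (hAsub i)
      have haipos : 0 < ai := by
        rcases lt_or_eq_of_le ha0 with hp | hp
        · exact hp
        · exfalso; rw [← hp] at hX; simp at hX; linarith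
      have hBpos : 0 < B := by rw [hBdef]; exact div_pos haipos (by positivity)
      have hgsAi : gs ∉ A i := by
        intro hmem
        have := L5 (A i) (hAsub i) hmem
        rw [h4B] at this
        linarith
      have hgsAh : gs ∉ A h := by
        intro hmem
        have := L5 (A h) (hAsub h) hmem
        rw [h4B] at this
        linarith
      have hji : j ≠ i := fun e => hgsAi (e ▸ hgsj)
      have hjh : j ≠ h := fun e => hgsAh (e ▸ hgsj)
      obtain ⟨hj1, hj2⟩ := henvy i j (Ne.symm hji)
      rcases hrcij : rc i j with - | g'
      · have h6 := hj2 hrcij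
        have h7 := L5 (A j) (hAsub j) hgsj
        rw [h4B] at h7
        linarith
      · have hg'S : g' ∈ S i := (hS i g').2 ⟨j, hji, hrcij⟩
        have henvy' := hj1 g' hrcij
        have hg'ne : gs ≠ g' := fun e => hgsS (e ▸ hg'S)
        have hgsj' : gs ∈ (A j).erase g' := mem_erase.2 ⟨hg'ne, hgsj⟩
        have h5 := L5 ((A j).erase g') ((erase_subset _ _).trans (hAsub j)) hgsj'
        rw [h4B] at h5
        by_cases hg'Ai : g' ∈ A i
        · have hca : 4*B - ε ≤ avgVal (v' i) ((A i).erase g') := by linarith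
          have hca' : 3*B ≤ avgVal (v' i) ((A i).erase g') := by linarith
          have hh := half_avg_of_erase hg'Ai (fun x hx => hv'nn x (hAsub i hx))
            (by linarith : (0:ℝ) < 3*B) hca'
          rw [← hXdef] at hh
          linarith
        · have e1 : (A i).erase g' = A i := erase_eq_of_notMem hg'Ai
          rw [e1, ← hXdef] at henvy'
          linarith
  · -- removal item g chosen for pair (i,h)
    have hgS : g ∈ S i := (hS i g).2 ⟨h, Ne.symm hih, hg0⟩
    have hgmem : g ∈ A i ∪ A h := hrcmem i h hih g hg0
    have henvyg : avgVal (v' i) ((A h).erase g) - ε ≤ avgVal (v' i) ((A i).erase g) :=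
      (henvy i h hih).1 g hg0
    set X := avgVal (v' i) ((A i).erase g) with hXdef
    have hsubAi : (A i).erase g ⊆ M := (erase_subset _ _).trans (hAsub i)
    have hsubAh : (A h).erase g ⊆ M := (erase_subset _ _).trans (hAsub h)
    by_cases hX : ai/(2*((m:ℝ)*(n:ℝ))) ≤ X
    · refine ⟨g, hgmem, ?_⟩
      have l1 : avgVal (v i) ((A h).erase g) ≤ avgVal (v' i) ((A h).erase g) :=
        key1 _ hsubAh
      have l3 : X ≤ avgVal (v i) ((A i).erase g) + ε := by
        rw [hXdef]; exact key2 _ hsubAi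
      have hDX : 2*ε ≤ D * X := hDXgen X hX
      have hL : avgVal (v i) ((A h).erase g) ≤ X + ε := by linarith
      have hR : X - ε ≤ avgVal (v i) ((A i).erase g) := by linarith
      nlinarith [mul_nonneg hD1.le (sub_nonneg.2 hL), mul_nonneg hD0 hε0]
    · push_neg at hX
      have hX0 : 0 ≤ X := keynn' _ hsubAi
      have haipos : 0 < ai := by
        rcases lt_or_eq_of_le ha0 with hp | hp
        · exact hp
        · exfalso; rw [← hp] at hX; simp at hX; linarith
      have hBpos : 0 < B := by rw [hBdef]; exact div_pos haipos (by positivity)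
      have hggs : gs ≠ g := fun e => hgsS (e ▸ hgS)
      have hgsAi : gs ∉ A i := by
        intro hmem
        have h5 := L5 ((A i).erase g) hsubAi (mem_erase.2 ⟨hggs, hmem⟩)
        rw [h4B, ← hXdef] at h5
        linarith
      have hgsAh : gs ∉ A h := by
        intro hmem
        have h5 := L5 ((A h).erase g) hsubAh (mem_erase.2 ⟨hggs, hmem⟩)
        rw [h4B] at h5
        linarith
      have hji : j ≠ i := fun e => hgsAi (e ▸ hgsj)
      have hjh : j ≠ h := fun e => hgsAh (e ▸ hgsj)
      obtain ⟨hj1, hj2⟩ := henvy i j (Ne.symm hji)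
      -- helper: conclude from a lower bound on avgVal (v' i) (A i)
      have hFinish : 3*B ≤ avgVal (v' i) (A i) →
          ∃ g0 ∈ A i ∪ A h,
            (1 - D) * avgVal (v i) ((A h).erase g0) ≤ avgVal (v i) ((A i).erase g0) := by
        intro hAiBig
        rcases mem_union.1 hgmem with hgAi | hgAh
        · -- g ∈ A i : use the largest item of A h as witness
          have egh : (A h).erase g = A h := erase_eq_of_notMem (hdisj i h hih g hgAi)
          obtain ⟨gmax, hgmaxAh, hgmaxmax⟩ := exists_max_image (A h) (v i) hAhe
          refine ⟨gmax, mem_union_right _ hgmaxAh, ?_⟩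
          have e1 : (A i).erase gmax = A i :=
            erase_eq_of_notMem (hdisj h i hih.symm gmax hgmaxAh)
          rw [e1]
          have l1 : avgVal (v i) ((A h).erase gmax) ≤ avgVal (v i) (A h) :=
            avg_erase_max hgmaxAh hgmaxmax (fun x _ => hvnn x)
          have l2 : avgVal (v i) (A h) ≤ avgVal (v' i) (A h) := key1 _ (hAsub h)
          have l4 : avgVal (v' i) (A h) ≤ X + ε := by
            rw [← egh]; linarith
          have l3 : avgVal (v' i) (A i) ≤ avgVal (v i) (A i) + ε := key2 _ (hAsub i)
          have hL : avgVal (v i) ((A h).erase gmax) < 2*B := by linarith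
          have hR : 2*B ≤ avgVal (v i) (A i) := by linarith
          nlinarith [mul_nonneg hD0 (keynn ((A h).erase gmax))]
        · -- g ∈ A h : contradiction, X = avgVal v' (A i) is big
          exfalso
          have e1 : (A i).erase g = A i := erase_eq_of_notMem (hdisj h i hih.symm g hgAh)
          have : X = avgVal (v' i) (A i) := by rw [hXdef, e1]
          rw [← this] at hAiBig
          linarith
      rcases hrcij : rc i j with - | g'
      · have h6 := hj2 hrcij
        have h7 := L5 (A j) (hAsub j) hgsj
        rw [h4B] at h7
        exact hFinish (by linarith)
      · have hg'S : g' ∈ S i := (hS i g').2 ⟨j, hji, hrcij⟩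
        have henvy' := hj1 g' hrcij
        have hg'ne : gs ≠ g' := fun e => hgsS (e ▸ hg'S)
        have hgsj' : gs ∈ (A j).erase g' := mem_erase.2 ⟨hg'ne, hgsj⟩
        have h5 := L5 ((A j).erase g') ((erase_subset _ _).trans (hAsub j)) hgsj'
        rw [h4B] at h5
        have hbig : 3*B ≤ avgVal (v' i) ((A i).erase g') := by linarith
        by_cases hg'Ai : g' ∈ A i
        · rcases mem_union.1 hgmem with hgAi | hgAh
          · -- witness g'
            refine ⟨g', mem_union_left _ hg'Ai, ?_⟩
            have e1 : (A h).erase g' = A h := erase_eq_of_notMem (hdisj i h hih g' hg'Ai)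
            have e2 : (A h).erase g = A h := erase_eq_of_notMem (hdisj i h hih g hgAi)
            rw [e1]
            have l2 : avgVal (v i) (A h) ≤ avgVal (v' i) (A h) := key1 _ (hAsub h)
            have l4 : avgVal (v' i) (A h) ≤ X + ε := by rw [← e2]; linarith
            have l5 : avgVal (v' i) ((A i).erase g') ≤ avgVal (v i) ((A i).erase g') + ε :=
              key2 _ ((erase_subset _ _).trans (hAsub i))
            have hL : avgVal (v i) (A h) < 2*B := by linarith
            have hR : 2*B ≤ avgVal (v i) ((A i).erase g') := by linarith
            nlinarith [mul_nonneg hD0 (keynn (A h))]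
          · -- g ∈ A h : contradiction via half lemma
            exfalso
            have hh := half_avg_of_erase hg'Ai (fun x hx => hv'nn x (hAsub i hx))
              (by linarith : (0:ℝ) < 3*B) hbig
            have e1 : (A i).erase g = A i := erase_eq_of_notMem (hdisj h i hih.symm g hgAh)
            have hXeq : X = avgVal (v' i) (A i) := by rw [hXdef, e1]
            rw [← hXeq] at hh
            linarith
        · have e1 : (A i).erase g' = A i := erase_eq_of_notMem hg'Ai
          rw [e1] at hbig
          exact hFinish hbig
end

section
/- Suppose m ≤ n and the allocation A is obtained by the following greedy picking scheme: there are distinct items g_1, …, g_m such that for each i ≤ m, A_i = {g_i} and v_i(g_i) ≥ v_i(g) for every item g ∈ M \ {g_1, …, g_{i−1}}, and A_i = ∅ for every i > m. Then A is AEF-1. -/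
open Finset

/-- Greedy picking scheme for `m ≤ n`: the first `m` agents each get their favourite item
among the items not yet picked, and the remaining agents get nothing. The resulting
allocation is AEF-1. -/
theorem greedy_aef1_of_le {G : Type*} [DecidableEq G] (M : Finset G) (n : ℕ)
    (hm : M.card ≤ n)
    (v : Fin n → G → ℝ) (hv : ∀ i g, 0 ≤ v i g)
    (g : ℕ → G)
    (hginj : ∀ i j : ℕ, i < M.card → j < M.card → g i = g j → i = j)
    (A : Fin n → Finset G) (hA : IsAllocation M A)
    (hfirst : ∀ i : Fin n, (i : ℕ) < M.card → A i = {g (i : ℕ)})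
    (hrest : ∀ i : Fin n, M.card ≤ (i : ℕ) → A i = ∅)
    (hgreedy : ∀ i : Fin n, (i : ℕ) < M.card →
      ∀ y ∈ M \ (Finset.range (i : ℕ)).image g, v i y ≤ v i (g (i : ℕ))) :
    AEF1 v A := by
  intro i h hne
  rcases lt_or_ge (h : ℕ) M.card with hh | hh
  · refine ⟨g h, by simp [hfirst h hh], ?_⟩
    rw [hfirst h hh]
    simpa [avgVal] using avgVal_nonneg (hv i) ((A i).erase (g (h : ℕ)))
  · rcases lt_or_ge (i : ℕ) M.card with hi | hi
    · refine ⟨g i, by simp [hfirst i hi], ?_⟩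
      rw [hrest h hh]
      simpa [avgVal] using avgVal_nonneg (hv i) ((A i).erase (g (i : ℕ)))
    · exfalso
      rw [hrest h hh, hrest i hi] at hne
      simp at hne
end
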